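/- arXiv:2312.14298 — 3 statements merged into one kernel-verified Lean document; each statement's English description precedes it below -/
import Mathlib

section
/- In a tree T, a vertex v belongs to no minimal zero forcing set of T if and only if v is a B-vertex of T. -/
namespace ZF

variable {V : Type*}

/-- The set of vertices forced blue starting from `S`, under the standard color change
rule: a blue vertex with exactly one white neighbor forces that neighbor blue. -/
inductive Forced (G : SimpleGraph V) (S : Set V) : V → Prop
  | init {v : V} : v ∈ S → Forced G S v
  | force {u w : V} : Forced G S u → G.Adj u w →
      (∀ x, G.Adj u x → x ≠ w → Forced G S x) → Forced G S w

/-- `S` is a zero forcing set of `G`. -/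
def IsZFS (G : SimpleGraph V) (S : Set V) : Prop := ∀ v, Forced G S v

/-- `S` is a minimal zero forcing set of `G`. -/
def IsMinimalZFS (G : SimpleGraph V) (S : Set V) : Prop :=
  IsZFS G S ∧ ∀ S' ⊂ S, ¬ IsZFS G S'

/-- The zero forcing number of `G`. -/
noncomputable def zfNum (G : SimpleGraph V) : ℕ :=
  sInf {n | ∃ S : Set V, IsZFS G S ∧ S.ncard = n}

/-- A graph is well-forced if every minimal zero forcing set is minimum. -/
def WellForced (G : SimpleGraph V) : Prop :=
  ∀ S, IsMinimalZFS G S → S.ncard = zfNum G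

/-- Degree of a vertex (as the `ncard` of its neighbor set). -/
noncomputable def deg (G : SimpleGraph V) (v : V) : ℕ := (G.neighborSet v).ncard

end ZF

open ZF SimpleGraph

namespace ZF

variable {V : Type*}

/-- Vertices of `A` having a double pendant within the induced subgraph on `A`:
two distinct vertices of `A` whose only neighbor within `A` is `v`. -/
def bstep (G : SimpleGraph V) (A : Set V) : Set V :=
  {v ∈ A | ∃ u w, u ≠ w ∧ u ∈ A ∧ w ∈ A ∧
    G.neighborSet u ∩ A = {v} ∧ G.neighborSet w ∩ A = {v}}

/-- The vertex set of the graph `G_i` in the recursive definition of `B`-vertices: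
`G_0 = G`, and `G_{i+1}` is obtained from `G_i` by deleting the vertices with a double
pendant in `G_i` along with all of their neighbors of degree one in `G_i`. -/
noncomputable def remSet (G : SimpleGraph V) : ℕ → Set V
  | 0 => Set.univ
  | (i + 1) =>
      remSet G i \ (bstep G (remSet G i) ∪
        {u ∈ remSet G i | (G.neighborSet u ∩ remSet G i).ncard = 1 ∧
          ∃ b ∈ bstep G (remSet G i), G.Adj u b})

/-- `v` is a `B`-vertex of `G`: it has a double pendant in some `G_i`. -/
def IsBVertex (G : SimpleGraph V) (v : V) : Prop :=
  ∃ i, v ∈ bstep G (remSet G i)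

end ZF

namespace ZF

variable {V : Type*}


/-- relative fort -/
def FortOn (T : SimpleGraph V) (A F : Set V) : Prop :=
  F.Nonempty ∧ F ⊆ A ∧ ∀ y ∈ A, y ∉ F → (T.neighborSet y ∩ F).ncard ≠ 1

variable [Fintype V] {T : SimpleGraph V}
set_option linter.unusedSectionVars false

lemma forced_mono {S S' : Set V} (h : ∀ s ∈ S, Forced T S' s) {x : V}
    (hx : Forced T S x) : Forced T S' x := by
  induction hx with
  | init hv => exact h _ hv
  | force h1 hadj hside ih1 ihside => exact Forced.force ih1 hadj ihside

lemma zfs_hits_fort {S F : Set V} (hS : IsZFS T S) (hF : FortOn T Set.univ F) :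
    (S ∩ F).Nonempty := by
  by_contra hne
  rw [Set.not_nonempty_iff_eq_empty] at hne
  have key : ∀ x, Forced T S x → x ∉ F := by
    intro x hx
    induction hx with
    | @init z hv =>
      intro hxF
      exact Set.eq_empty_iff_forall_notMem.1 hne z ⟨hv, hxF⟩
    | @force u w h1 hadj hside ih1 ihside =>
      intro hwF
      have hset : T.neighborSet u ∩ F = {w} := by
        apply Set.eq_singleton_iff_unique_mem.2
        refine ⟨⟨hadj, hwF⟩, ?_⟩
        intro x hx
        by_contra hxw
        exact ihside x hx.1 hxw hx.2
      have := hF.2.2 u (Set.mem_univ u) ih1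
      rw [hset] at this
      simp at this
  obtain ⟨f, hf⟩ := hF.1
  exact key f (hS f) hf

lemma zfs_of_hits_forts {S : Set V} (h : ∀ F, FortOn T Set.univ F → (S ∩ F).Nonempty) :
    IsZFS T S := by
  by_contra hS
  have hW : {x | ¬ Forced T S x}.Nonempty := by
    by_contra hne
    rw [Set.not_nonempty_iff_eq_empty] at hne
    exact hS fun v => by_contra fun hv => (Set.eq_empty_iff_forall_notMem.1 hne v) hv
  set W := {x | ¬ Forced T S x} with hWdef
  have hfort : FortOn T Set.univ W := by
    refine ⟨hW, Set.subset_univ _, ?_⟩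
    intro y _ hy hcard
    obtain ⟨w, hw⟩ := Set.ncard_eq_one.1 hcard
    have hyF : Forced T S y := not_not.1 hy
    have hwW : w ∈ T.neighborSet y ∩ W := hw ▸ rfl
    have : Forced T S w := by
      refine Forced.force hyF hwW.1 ?_
      intro x hx hxw
      by_contra hxn
      have : x ∈ T.neighborSet y ∩ W := ⟨hx, hxn⟩
      rw [hw] at this
      exact hxw this
    exact hwW.2 this
  obtain ⟨s, hs1, hs2⟩ := h W hfort
  exact hs2 (Forced.init hs1)

lemma exists_minimal_zfs_subset {S : Set V} (hS : IsZFS T S) :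
    ∃ Z ⊆ S, IsMinimalZFS T Z := by
  classical
  let P : Set ℕ := {n | ∃ Z ⊆ S, IsZFS T Z ∧ Z.ncard = n}
  have hPne : S.ncard ∈ P := ⟨S, subset_rfl, hS, rfl⟩
  obtain ⟨Z, hZS, hZzfs, hZcard⟩ := Nat.sInf_mem (⟨_, hPne⟩ : P.Nonempty)
  refine ⟨Z, hZS, hZzfs, ?_⟩
  intro S' hS' hS'zfs
  have : S'.ncard ∈ P := ⟨S', hS'.1.trans hZS, hS'zfs, rfl⟩
  have hlt : S'.ncard < Z.ncard := Set.ncard_lt_ncard hS' (Set.toFinite Z)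
  have := Nat.sInf_le this
  omega

end ZF
namespace ZFtest
variable {V : Type*}

section Walks
variable {T : SimpleGraph V}
open SimpleGraph

/-- In an acyclic graph, there is no walk between two distinct neighbors of `v`
avoiding `v`. -/
lemma no_avoid_walk (hT : T.IsAcyclic) {v a b : V} (hva : T.Adj v a) (hvb : T.Adj v b)
    (hab : a ≠ b) (p : T.Walk a b) (hv : v ∉ p.support) : False := by
  classical
  have huniq := SimpleGraph.isAcyclic_iff_path_unique.1 hT (v := v) (w := b)
  let q : T.Path a b := p.toPath
  have hq : v ∉ (q : T.Walk a b).support := fun h => hv (Walk.support_toPath_subset p h)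
  have hpath1 : (Walk.cons hva (q : T.Walk a b)).IsPath := by
    rw [Walk.cons_isPath_iff]
    exact ⟨q.2, hq⟩
  let P1 : T.Path v b := ⟨Walk.cons hva (q : T.Walk a b), hpath1⟩
  let P2 : T.Path v b := ⟨Walk.cons hvb Walk.nil, by
    rw [Walk.cons_isPath_iff]
    constructor
    · exact Walk.IsPath.nil
    · simp [Walk.support_nil]
      exact fun h => (T.ne_of_adj hvb) h⟩
  have heq := huniq P1 P2
  have ha1 : a ∈ (P1 : T.Walk v b).support := by
    simp [P1, Walk.support_cons]
  rw [heq] at ha1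
  simp [P2, Walk.support_cons, Walk.support_nil] at ha1
  rcases ha1 with h | h
  · exact (T.ne_of_adj hva) h.symm
  · exact hab h
end Walks

section Rem
variable [Fintype V] (T : SimpleGraph V)
set_option linter.unusedSectionVars false

def Pset (A : Set V) : Set V :=
  {u ∈ A | (T.neighborSet u ∩ A).ncard = 1 ∧ ∃ b ∈ ZF.bstep T A, T.Adj u b}

lemma remSet_succ (i : ℕ) :
    ZF.remSet T (i + 1) = ZF.remSet T i \ (ZF.bstep T (ZF.remSet T i) ∪ Pset T (ZF.remSet T i)) := rfl

lemma remSet_succ_subset (i : ℕ) : ZF.remSet T (i + 1) ⊆ ZF.remSet T i :=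
  Set.diff_subset

lemma remSet_antitone {i j : ℕ} (h : i ≤ j) : ZF.remSet T j ⊆ ZF.remSet T i := by
  induction j with
  | zero => simp_all
  | succ n ih =>
    rcases Nat.lt_or_ge i (n+1) with h' | h'
    · exact (remSet_succ_subset T n).trans (ih (by omega))
    · have : i = n + 1 := by omega
      subst this; exact subset_rfl

lemma bstep_subset (A : Set V) : ZF.bstep T A ⊆ A := fun x hx => hx.1

lemma removed_classify {x : V} {j : ℕ} (hx : x ∉ ZF.remSet T j) :
    ∃ j' < j, x ∈ ZF.remSet T j' ∧ x ∉ ZF.remSet T (j' + 1) := by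
  induction j with
  | zero => exact absurd (Set.mem_univ x) hx
  | succ n ih =>
    by_cases hn : x ∈ ZF.remSet T n
    · exact ⟨n, Nat.lt_succ_self n, hn, hx⟩
    · obtain ⟨j', hj', h1, h2⟩ := ih hn
      exact ⟨j', by omega, h1, h2⟩

lemma removed_cases {x : V} {j : ℕ} (h1 : x ∈ ZF.remSet T j) (h2 : x ∉ ZF.remSet T (j+1)) :
    x ∈ ZF.bstep T (ZF.remSet T j) ∨ x ∈ Pset T (ZF.remSet T j) := by
  rw [remSet_succ] at h2
  by_contra h
  push_neg at h
  exact h2 ⟨h1, fun hmem => hmem.elim h.1 h.2⟩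

lemma exists_stable : ∃ j, ZF.remSet T (j + 1) = ZF.remSet T j := by
  by_contra h
  push_neg at h
  have key : ∀ j, (ZF.remSet T j).ncard + j ≤ (ZF.remSet T 0).ncard := by
    intro j
    induction j with
    | zero => omega
    | succ n ih =>
      have hlt : (ZF.remSet T (n+1)).ncard < (ZF.remSet T n).ncard := by
        apply Set.ncard_lt_ncard
        · exact lt_of_le_of_ne (remSet_succ_subset T n) (h n)
        · exact Set.toFinite _
      omega
  have := key ((ZF.remSet T 0).ncard + 1)
  omega

lemma bstep_empty_of_stable {j : ℕ} (h : ZF.remSet T (j + 1) = ZF.remSet T j) :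
    ZF.bstep T (ZF.remSet T j) = ∅ := by
  by_contra hne
  obtain ⟨b, hb⟩ := Set.nonempty_iff_ne_empty.2 hne
  have hbA : b ∈ ZF.remSet T j := hb.1
  have : b ∈ ZF.remSet T (j+1) := h ▸ hbA
  rw [remSet_succ] at this
  exact this.2 (Or.inl hb)

end Rem
end ZFtest
namespace ZF3
open SimpleGraph
variable {V : Type*} [Fintype V] {T : SimpleGraph V}
set_option linter.unusedSectionVars false
set_option maxHeartbeats 1000000

/-- The branch of `u` away from `v`: vertices reachable from `u` by walks avoiding `v`. -/
def Cset (T : SimpleGraph V) (v u : V) : Set V := {x | ∃ p : T.Walk u x, v ∉ p.support}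

lemma Cset_self {v u : V} (h : u ≠ v) : u ∈ Cset T v u :=
  ⟨SimpleGraph.Walk.nil, by simp [SimpleGraph.Walk.support_nil]; exact fun he => h he.symm⟩

lemma Cset_notMem {v u : V} : v ∉ Cset T v u := by
  rintro ⟨p, hp⟩
  exact hp (SimpleGraph.Walk.end_mem_support p)

lemma Cset_closure {v u x y : V} (hx : x ∈ Cset T v u) (hadj : T.Adj x y) (hy : y ≠ v) :
    y ∈ Cset T v u := by
  obtain ⟨p, hp⟩ := hx
  refine ⟨p.append (SimpleGraph.Walk.cons hadj SimpleGraph.Walk.nil), ?_⟩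
  rw [SimpleGraph.Walk.support_append]
  intro hmem
  rcases List.mem_append.1 hmem with h | h
  · exact hp h
  · simp [SimpleGraph.Walk.support_cons, SimpleGraph.Walk.support_nil] at h
    exact hy h.symm

lemma Cset_unique_nbr (hT : T.IsAcyclic) {v u y : V} (hvu : T.Adj v u)
    (hy : y ∈ Cset T v u) (hadj : T.Adj v y) : y = u := by
  by_contra hne
  obtain ⟨p, hp⟩ := hy
  exact ZFtest.no_avoid_walk hT hvu hadj (fun h => hne h.symm) p hp

lemma Cset_disjoint (hT : T.IsAcyclic) {v u w : V} (hvu : T.Adj v u) (hvw : T.Adj v w)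
    (huw : u ≠ w) {x : V} (hxu : x ∈ Cset T v u) (hxw : x ∈ Cset T v w) : False := by
  obtain ⟨p, hp⟩ := hxu
  obtain ⟨q, hq⟩ := hxw
  refine ZFtest.no_avoid_walk hT hvu hvw huw (p.append q.reverse) ?_
  rw [SimpleGraph.Walk.support_append]
  intro hmem
  rcases List.mem_append.1 hmem with h | h
  · exact hp h
  · apply hq
    have hv' : v ∈ q.reverse.support := List.mem_of_mem_tail h
    rw [SimpleGraph.Walk.support_reverse, List.mem_reverse] at hv'
    exact hv'

/-- Every fort contains a fort consisting only of non-B-vertices. -/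
lemma bfree_subfort_aux (hT : T.IsAcyclic) :
    ∀ n (F : Set V), F.ncard ≤ n → ZF.FortOn T Set.univ F →
    ∃ G, ZF.FortOn T Set.univ G ∧ G ⊆ F ∧ ∀ x ∈ G, ¬ ZF.IsBVertex T x := by
  intro n
  induction n with
  | zero =>
    intro F hcard hF
    have := (Set.ncard_pos (Set.toFinite F)).2 hF.1
    omega
  | succ n ih =>
    intro F hcard hF
    by_cases hB : ∃ j, ∃ x ∈ F, x ∈ ZF.bstep T (ZF.remSet T j)
    swap
    · push_neg at hB
      exact ⟨F, hF, subset_rfl, fun x hx ⟨j, hj⟩ => hB j x hx hj⟩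
    · classical
      let jm := Nat.find hB
      obtain ⟨v, hvF, hvb⟩ : ∃ x ∈ F, x ∈ ZF.bstep T (ZF.remSet T jm) := Nat.find_spec hB
      have hmin : ∀ j' < jm, ∀ x ∈ F, x ∉ ZF.bstep T (ZF.remSet T j') := by
        intro j' hj' x hx hxb
        exact Nat.find_min hB hj' ⟨x, hx, hxb⟩
      set A := ZF.remSet T jm with hA
      obtain ⟨hvA, u, w, huw, huA, hwA, hu, hw⟩ := hvb
      -- every pendant of a vertex of A is in F
      have pend_in_F : ∀ p, p ∈ A → T.neighborSet p ∩ A = {v} → p ∈ F := by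
        intro p hpA hpnbr
        by_contra hpF
        have hvNp : v ∈ T.neighborSet p := by
          have : v ∈ T.neighborSet p ∩ A := hpnbr ▸ rfl
          exact this.1
        have h1 : (T.neighborSet p ∩ F).ncard ≠ 1 := hF.2.2 p (Set.mem_univ p) hpF
        have hvin : v ∈ T.neighborSet p ∩ F := ⟨hvNp, hvF⟩
        have : ∃ d ∈ T.neighborSet p ∩ F, d ≠ v := by
          by_contra hno
          push_neg at hno
          apply h1
          rw [Set.ncard_eq_one]
          exact ⟨v, Set.eq_singleton_iff_unique_mem.2 ⟨hvin, fun x hx => hno x hx⟩⟩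
        obtain ⟨d, ⟨hdN, hdF⟩, hdv⟩ := this
        have hdA : d ∉ A := by
          intro hdA
          have : d ∈ T.neighborSet p ∩ A := ⟨hdN, hdA⟩
          rw [hpnbr] at this
          exact hdv this
        obtain ⟨j', hj', hd1, hd2⟩ := ZFtest.removed_classify T hdA
        rcases ZFtest.removed_cases T hd1 hd2 with hcase | hcase
        · exact hmin j' hj' d hdF hcase
        · obtain ⟨hdA', hcard1, b, hb, hadjdb⟩ := hcase
          obtain ⟨c, hc⟩ := Set.ncard_eq_one.1 hcard1
          have hbmem : b ∈ T.neighborSet d ∩ ZF.remSet T j' := ⟨hadjdb, (ZFtest.bstep_subset T _) hb⟩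
          rw [hc] at hbmem
          have hpmem : p ∈ T.neighborSet d ∩ ZF.remSet T j' := by
            refine ⟨(hdN : T.Adj p d).symm, ?_⟩
            exact ZFtest.remSet_antitone T (by omega : j' ≤ jm) hpA
          rw [hc] at hpmem
          have hpb : p = b := by
            simp at hbmem hpmem; rw [hpmem, ← hbmem]
          -- p ∈ bstep at stage j', so p removed at j'+1, contradicting p ∈ A
          have hpA1 : p ∈ ZF.remSet T (j' + 1) :=
            ZFtest.remSet_antitone T (by omega : j' + 1 ≤ jm) hpA
          rw [ZFtest.remSet_succ] at hpA1
          exact hpA1.2 (Or.inl (hpb ▸ hb))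
      have huF : u ∈ F := pend_in_F u huA hu
      have hwF : w ∈ F := pend_in_F w hwA hw
      have hadjvu : T.Adj v u := by
        have : v ∈ T.neighborSet u ∩ A := hu ▸ rfl
        exact this.1.symm
      have hadjvw : T.Adj v w := by
        have : v ∈ T.neighborSet w ∩ A := hw ▸ rfl
        exact this.1.symm
      set Cu := Cset T v u with hCu
      set Cw := Cset T v w with hCw
      set F' := F ∩ (Cu ∪ Cw) with hF'
      have hvCu : v ∉ Cu := Cset_notMem
      have hvCw : v ∉ Cw := Cset_notMem
      have hvF' : v ∉ F' := fun h => h.2.elim hvCu hvCw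
      have huF' : u ∈ F' := ⟨huF, Or.inl (Cset_self (T.ne_of_adj hadjvu).symm)⟩
      have hwF' : w ∈ F' := ⟨hwF, Or.inr (Cset_self (T.ne_of_adj hadjvw).symm)⟩
      have hfort' : ZF.FortOn T Set.univ F' := by
        refine ⟨⟨u, huF'⟩, Set.subset_univ _, ?_⟩
        intro y _ hyF'
        by_cases hyv : y = v
        · subst hyv
          have hsub : ({u, w} : Set V) ⊆ T.neighborSet y ∩ F' := by
            intro x hx
            rcases hx with h | h
            · subst h; exact ⟨hadjvu, huF'⟩
            · rw [Set.mem_singleton_iff] at h; subst h; exact ⟨hadjvw, hwF'⟩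
          have h2 : 2 ≤ (T.neighborSet y ∩ F').ncard := by
            calc 2 = ({u, w} : Set V).ncard := (Set.ncard_pair huw).symm
            _ ≤ _ := Set.ncard_le_ncard hsub (Set.toFinite _)
          omega
        · by_cases hyC : y ∈ Cu ∪ Cw
          · have hyF : y ∉ F := fun h => hyF' ⟨h, hyC⟩
            have : T.neighborSet y ∩ F' = T.neighborSet y ∩ F := by
              apply Set.eq_of_subset_of_subset
              · exact Set.inter_subset_inter_right _ Set.inter_subset_left
              · rintro x ⟨hxN, hxF⟩
                refine ⟨hxN, hxF, ?_⟩
                have hxv : x ≠ v := by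
                  rintro rfl
                  -- y is adjacent to v and in Cu ∪ Cw, so y = u or y = w, but y ∉ F
                  rcases hyC with h | h
                  · exact hyF (Cset_unique_nbr hT hadjvu h hxN.symm ▸ huF)
                  · exact hyF (Cset_unique_nbr hT hadjvw h hxN.symm ▸ hwF)
                rcases hyC with h | h
                · exact Or.inl (Cset_closure h hxN.symm.symm hxv)
                · exact Or.inr (Cset_closure h hxN.symm.symm hxv)
            rw [this]
            exact hF.2.2 y (Set.mem_univ y) hyF
          · have : T.neighborSet y ∩ F' = ∅ := by
              rw [Set.eq_empty_iff_forall_notMem]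
              rintro x ⟨hxN, _, hxC⟩
              rcases hxC with h | h
              · exact hyC (Or.inl (Cset_closure h (T.adj_symm hxN) hyv))
              · exact hyC (Or.inr (Cset_closure h (T.adj_symm hxN) hyv))
            rw [this]
            simp
      have hlt : F'.ncard < F.ncard := by
        apply Set.ncard_lt_ncard
        · exact ⟨Set.inter_subset_left, fun hsub => hvF' (hsub hvF)⟩
        · exact Set.toFinite _
      obtain ⟨G, hG1, hG2, hG3⟩ := ih F' (by omega) hfort'
      exact ⟨G, hG1, hG2.trans Set.inter_subset_left, hG3⟩

lemma bvertex_not_in_minimal (hT : T.IsAcyclic) {v : V} {S : Set V}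
    (hv : ZF.IsBVertex T v) (hS : ZF.IsMinimalZFS T S) : v ∉ S := by
  intro hvS
  have hzfs : ZF.IsZFS T (S \ {v}) := by
    apply ZF.zfs_of_hits_forts
    intro F hF
    have hSF := ZF.zfs_hits_fort hS.1 hF
    by_cases h : ∃ s ∈ S ∩ F, s ≠ v
    · obtain ⟨s, ⟨hs1, hs2⟩, hs3⟩ := h
      exact ⟨s, ⟨hs1, hs3⟩, hs2⟩
    · push_neg at h
      have hvF : v ∈ F := by
        obtain ⟨s, hs⟩ := hSF
        have := h s hs
        subst this; exact hs.2
      obtain ⟨G, hG1, hG2, hG3⟩ := bfree_subfort_aux hT F.ncard F le_rfl hF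
      obtain ⟨s, hs1, hs2⟩ := ZF.zfs_hits_fort hS.1 hG1
      have hsv : s ≠ v := fun he => hG3 s hs2 (he ▸ hv)
      exact ⟨s, ⟨hs1, hsv⟩, hG2 hs2⟩
  exact hS.2 (S \ {v}) ⟨Set.diff_subset, fun hsub => (hsub hvS).2 rfl⟩ hzfs

end ZF3
namespace ZF4
open SimpleGraph
variable {V : Type*} [Fintype V] {T : SimpleGraph V}
set_option linter.unusedSectionVars false
set_option maxHeartbeats 1000000

lemma exists_other {s : Set V} {a : V} (ha : a ∈ s) (h : s.ncard ≠ 1) : ∃ b ∈ s, b ≠ a := by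
  by_contra h'
  push_neg at h'
  exact h (Set.ncard_eq_one.2 ⟨a, Set.eq_singleton_iff_unique_mem.2 ⟨ha, h'⟩⟩)

lemma eq_singleton_of_ncard_eq_one {s : Set V} {a : V} (h : s.ncard = 1) (ha : a ∈ s) :
    s = {a} := by
  obtain ⟨b, hb⟩ := Set.ncard_eq_one.1 h
  rw [hb] at ha ⊢
  rw [Set.mem_singleton_iff] at ha
  rw [ha]

/-- `v` has a private fort within `A`. -/
def Priv (T : SimpleGraph V) (A : Set V) (v : V) : Prop :=
  ∃ F, ZF.FortOn T A F ∧ v ∈ F ∧ ∀ G, ZF.FortOn T A G → G ⊆ F → v ∈ G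

lemma bstep_pset_disjoint {A : Set V} {b : V} (hb : b ∈ ZF.bstep T A) :
    b ∉ ZFtest.Pset T A := by
  rintro ⟨hbA, hcard, -⟩
  obtain ⟨hbA', u, w, huw, huA, hwA, hu, hw⟩ := hb
  have husub : ({u, w} : Set V) ⊆ T.neighborSet b ∩ A := by
    intro x hx
    rcases hx with h | h
    · subst h
      have : b ∈ T.neighborSet x ∩ A := hu ▸ rfl
      exact ⟨this.1.symm, huA⟩
    · rw [Set.mem_singleton_iff] at h; subst h
      have : b ∈ T.neighborSet x ∩ A := hw ▸ rfl
      exact ⟨this.1.symm, hwA⟩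
  have h2 : 2 ≤ (T.neighborSet b ∩ A).ncard := by
    calc 2 = ({u, w} : Set V).ncard := (Set.ncard_pair huw).symm
    _ ≤ _ := Set.ncard_le_ncard husub (Set.toFinite _)
  omega

/-- Lift a private fort from stage `j+1` to stage `j`. -/
lemma priv_lift {j : ℕ} {v : V} (h : Priv T (ZF.remSet T (j+1)) v) :
    Priv T (ZF.remSet T j) v := by
  classical
  obtain ⟨H, hHfort, hvH, hHpriv⟩ := h
  set A := ZF.remSet T j with hAdef
  set A' := ZF.remSet T (j+1) with hA'def
  have hA'sub : A' ⊆ A := ZFtest.remSet_succ_subset T j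
  have hA'eq : A' = A \ (ZF.bstep T A ∪ ZFtest.Pset T A) := ZFtest.remSet_succ T j
  -- choose a pendant for each b-vertex
  have hpend : ∀ b ∈ ZF.bstep T A, ∃ u, u ∈ A ∧ T.neighborSet u ∩ A = {b} := by
    rintro b ⟨hbA, u, w, huw, huA, hwA, hu, hw⟩
    exact ⟨u, huA, hu⟩
  set Bdef := {b ∈ ZF.bstep T A | (T.neighborSet b ∩ H).ncard = 1} with hBdef
  have hpf : ∀ b ∈ Bdef, ∃ u, u ∈ A ∧ T.neighborSet u ∩ A = {b} := fun b hb => hpend b hb.1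
  choose pf hpfA hpfnbr using hpf
  -- pendants are in Pset, not in A'
  have hpfP : ∀ b (hb : b ∈ Bdef), pf b hb ∈ ZFtest.Pset T A := by
    intro b hb
    refine ⟨hpfA b hb, by rw [hpfnbr b hb]; exact Set.ncard_singleton b, b, hb.1, ?_⟩
    have : b ∈ T.neighborSet (pf b hb) ∩ A := (hpfnbr b hb) ▸ rfl
    exact this.1
  have hpfA' : ∀ b (hb : b ∈ Bdef), pf b hb ∉ A' := by
    intro b hb hmem
    rw [hA'eq] at hmem
    exact hmem.2 (Or.inr (hpfP b hb))
  have hbA' : ∀ b ∈ ZF.bstep T A, b ∉ A' := by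
    intro b hb hmem
    rw [hA'eq] at hmem
    exact hmem.2 (Or.inl hb)
  -- the adjacency characterization of pendants
  have hadjpf : ∀ b (hb : b ∈ Bdef) (x : V), x ∈ A → T.Adj x (pf b hb) → x = b := by
    intro b hb x hxA hadj
    have : x ∈ T.neighborSet (pf b hb) ∩ A := ⟨hadj.symm, hxA⟩
    rw [hpfnbr b hb] at this
    exact this
  set PF := {x | ∃ b, ∃ hb : b ∈ Bdef, x = pf b hb} with hPF
  set F := H ∪ PF with hFdef
  have hHA' : H ⊆ A' := hHfort.2.1
  have hPFA' : ∀ x ∈ PF, x ∉ A' := by rintro x ⟨b, hb, rfl⟩; exact hpfA' b hb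
  have hFA : F ⊆ A := by
    rintro x (hx | hx)
    · exact hA'sub (hHA' hx)
    · obtain ⟨b, hb, rfl⟩ := hx; exact hpfA b hb
  have hFbstep : ∀ b ∈ ZF.bstep T A, b ∉ F := by
    rintro b hb (h | h)
    · exact hbA' b hb (hHA' h)
    · obtain ⟨b', hb', heq⟩ := h
      have := hpfP b' hb'
      rw [← heq] at this
      exact bstep_pset_disjoint hb this
  have hfort : ZF.FortOn T A F := by
    refine ⟨⟨v, Or.inl hvH⟩, hFA, ?_⟩
    intro y hyA hyF
    by_cases hyA' : y ∈ A'
    · -- surviving vertices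
      have hyH : y ∉ H := fun h => hyF (Or.inl h)
      have heq : T.neighborSet y ∩ F = T.neighborSet y ∩ H := by
        apply Set.eq_of_subset_of_subset
        · rintro x ⟨hxN, hx | hx⟩
          · exact ⟨hxN, hx⟩
          · obtain ⟨b, hb, rfl⟩ := hx
            have := hadjpf b hb y hyA hxN
            subst this
            exact absurd hyA' (hbA' y hb.1)
        · rintro x ⟨hxN, hx⟩; exact ⟨hxN, Or.inl hx⟩
      rw [heq]
      exact hHfort.2.2 y hyA' hyH
    · have hyrem : y ∈ ZF.bstep T A ∪ ZFtest.Pset T A := by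
        by_contra hy
        rw [hA'eq] at hyA'
        exact hyA' ⟨hyA, hy⟩
      rcases hyrem with hyb | hyp
      · -- y is a b-vertex
        by_cases hyBdef : y ∈ Bdef
        · have heq : T.neighborSet y ∩ F = (T.neighborSet y ∩ H) ∪ {pf y hyBdef} := by
            apply Set.eq_of_subset_of_subset
            · rintro x ⟨hxN, hx | hx⟩
              · exact Or.inl ⟨hxN, hx⟩
              · obtain ⟨b, hb, rfl⟩ := hx
                have := hadjpf b hb y hyA hxN
                subst this
                exact Or.inr rfl
            · rintro x (⟨hxN, hx⟩ | hx)
              · exact ⟨hxN, Or.inl hx⟩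
              · rw [Set.mem_singleton_iff] at hx
                subst hx
                refine ⟨?_, Or.inr ⟨y, hyBdef, rfl⟩⟩
                have : y ∈ T.neighborSet (pf y hyBdef) ∩ A := (hpfnbr y hyBdef) ▸ rfl
                exact this.1.symm
          rw [heq]
          obtain ⟨h₀, hh₀⟩ := Set.ncard_eq_one.1 hyBdef.2
          rw [hh₀]
          have hne : h₀ ≠ pf y hyBdef := by
            intro hcon
            have hh : h₀ ∈ T.neighborSet y ∩ H := hh₀ ▸ rfl
            exact hpfA' y hyBdef (hcon ▸ hHA' hh.2)
          rw [Set.singleton_union, Set.ncard_pair hne]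
          omega
        · have heq : T.neighborSet y ∩ F = T.neighborSet y ∩ H := by
            apply Set.eq_of_subset_of_subset
            · rintro x ⟨hxN, hx | hx⟩
              · exact ⟨hxN, hx⟩
              · obtain ⟨b, hb, rfl⟩ := hx
                have := hadjpf b hb y hyA hxN
                subst this
                exact absurd hb hyBdef
            · rintro x ⟨hxN, hx⟩; exact ⟨hxN, Or.inl hx⟩
          rw [heq]
          intro hcon
          exact hyBdef ⟨hyb, hcon⟩
      · -- y is a pendant vertex
        obtain ⟨hyA2, hycard, b, hbB, hadjyb⟩ := hyp
        have hbsing : T.neighborSet y ∩ A = {b} :=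
          eq_singleton_of_ncard_eq_one hycard ⟨hadjyb, (ZFtest.bstep_subset T A) hbB⟩
        have heq : T.neighborSet y ∩ F = ∅ := by
          rw [Set.eq_empty_iff_forall_notMem]
          rintro x ⟨hxN, hxF⟩
          have hxA : x ∈ A := hFA hxF
          have : x ∈ T.neighborSet y ∩ A := ⟨hxN, hxA⟩
          rw [hbsing] at this
          rw [Set.mem_singleton_iff] at this
          subst this
          exact hFbstep x hbB hxF
        rw [heq]
        simp
  refine ⟨F, hfort, Or.inl hvH, ?_⟩
  -- privacy
  intro G hGfort hGF
  by_cases hGC : (G ∩ A').Nonempty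
  · have hGH : G ∩ A' ⊆ H := by
      rintro x ⟨hxG, hxA'⟩
      rcases hGF hxG with h | h
      · exact h
      · exact absurd hxA' (hPFA' x h)
    have hGfort' : ZF.FortOn T A' (G ∩ A') := by
      refine ⟨hGC, Set.inter_subset_right, ?_⟩
      intro y hyA' hyG
      have hyGA : y ∉ G := fun h => hyG ⟨h, hyA'⟩
      have heq : T.neighborSet y ∩ (G ∩ A') = T.neighborSet y ∩ G := by
        apply Set.eq_of_subset_of_subset
        · exact Set.inter_subset_inter_right _ Set.inter_subset_left
        · rintro x ⟨hxN, hxG⟩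
          refine ⟨hxN, hxG, ?_⟩
          rcases hGF hxG with h | h
          · exact hHA' h
          · obtain ⟨b, hb, rfl⟩ := h
            have := hadjpf b hb y (hA'sub hyA') hxN
            subst this
            exact absurd hyA' (hbA' y hb.1)
      rw [heq]
      exact hGfort.2.2 y (hA'sub hyA') hyGA
    exact Set.inter_subset_left (hHpriv (G ∩ A') hGfort' hGH)
  · exfalso
    rw [Set.not_nonempty_iff_eq_empty] at hGC
    obtain ⟨g, hg⟩ := hGfort.1
    have hgPF : g ∈ PF := by
      rcases hGF hg with h | h
      · exact absurd (Set.eq_empty_iff_forall_notMem.1 hGC g ⟨hg, hHA' h⟩) (fun h => h)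
      · exact h
    obtain ⟨b, hb, rfl⟩ := hgPF
    have hbG : b ∉ G := fun h => hFbstep b hb.1 (hGF h)
    have hcard := hGfort.2.2 b ((ZFtest.bstep_subset T A) hb.1) hbG
    apply hcard
    have heq : T.neighborSet b ∩ G = {pf b hb} := by
      apply Set.eq_of_subset_of_subset
      · rintro x ⟨hxN, hxG⟩
        rcases hGF hxG with h | h
        · exact absurd (Set.eq_empty_iff_forall_notMem.1 hGC x ⟨hxG, hHA' h⟩) (fun h => h)
        · obtain ⟨b', hb', rfl⟩ := h
          have : b = b' := hadjpf b' hb' b ((ZFtest.bstep_subset T A) hb.1) hxN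
          subst this
          rfl
      · rintro x hx
        rw [Set.mem_singleton_iff] at hx
        subst hx
        refine ⟨?_, hg⟩
        have : b ∈ T.neighborSet (pf b hb) ∩ A := (hpfnbr b hb) ▸ rfl
        exact this.1.symm
    rw [heq]
    exact Set.ncard_singleton _

/-- A pendant vertex has a private fort at its stage. -/
lemma priv_pendant {A : Set V} {v : V} (hvP : v ∈ ZFtest.Pset T A) : Priv T A v := by
  obtain ⟨hvA, hvcard, b, hbB, hadjvb⟩ := hvP
  have hvsing : T.neighborSet v ∩ A = {b} :=
    eq_singleton_of_ncard_eq_one hvcard ⟨hadjvb, (ZFtest.bstep_subset T A) hbB⟩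
  obtain ⟨hbA, u, w, huw, huA, hwA, hu, hw⟩ := hbB
  -- choose a pendant of b different from v
  have : ∃ u', u' ≠ v ∧ u' ∈ A ∧ T.neighborSet u' ∩ A = {b} := by
    by_cases h : u = v
    · subst h
      exact ⟨w, fun hc => huw hc.symm, hwA, hw⟩
    · exact ⟨u, h, huA, hu⟩
  obtain ⟨u', hu'v, hu'A, hu'⟩ := this
  have hbv : b ≠ v := (T.ne_of_adj hadjvb).symm
  have hbu' : b ≠ u' := by
    intro h
    have : b ∈ T.neighborSet u' ∩ A := hu' ▸ rfl
    exact T.irrefl (h ▸ this.1)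
  have hadjbu' : T.Adj b u' := by
    have : b ∈ T.neighborSet u' ∩ A := hu' ▸ rfl
    exact this.1.symm
  have hadjbv : T.Adj b v := hadjvb.symm
  refine ⟨{v, u'}, ⟨⟨v, Or.inl rfl⟩, ?_, ?_⟩, Or.inl rfl, ?_⟩
  · rintro x (h | h)
    · subst h; exact hvA
    · rw [Set.mem_singleton_iff] at h; subst h; exact hu'A
  · intro y hyA hyF
    by_cases hyb : y = b
    · subst hyb
      have heq : T.neighborSet y ∩ {v, u'} = {v, u'} := by
        apply Set.eq_of_subset_of_subset
        · exact Set.inter_subset_right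
        · rintro x (h | h)
          · subst h; exact ⟨hadjbv, Or.inl rfl⟩
          · rw [Set.mem_singleton_iff] at h; subst h
            exact ⟨hadjbu', Or.inr rfl⟩
      rw [heq, Set.ncard_pair (fun h => hu'v h.symm)]
      omega
    · have heq : T.neighborSet y ∩ {v, u'} = ∅ := by
        rw [Set.eq_empty_iff_forall_notMem]
        rintro x ⟨hxN, hx⟩
        rcases hx with hx | hx
        · have hy' : y ∈ T.neighborSet v ∩ A := ⟨(hx ▸ hxN : v ∈ T.neighborSet y).symm, hyA⟩
          rw [hvsing, Set.mem_singleton_iff] at hy'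
          exact hyb hy'
        · rw [Set.mem_singleton_iff] at hx
          have hy' : y ∈ T.neighborSet u' ∩ A := ⟨(hx ▸ hxN : u' ∈ T.neighborSet y).symm, hyA⟩
          rw [hu', Set.mem_singleton_iff] at hy'
          exact hyb hy'
      rw [heq]
      simp
  · intro G hGfort hGsub
    by_contra hvG
    have hGu' : G = {u'} := by
      apply Set.eq_of_subset_of_subset
      · intro x hx
        rcases hGsub hx with h | h
        · exact absurd (h ▸ hx) hvG
        · exact h
      · intro x hx
        rw [Set.mem_singleton_iff] at hx
        subst hx
        obtain ⟨g, hg⟩ := hGfort.1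
        rcases hGsub hg with h | h
        · exact absurd (h ▸ hg) hvG
        · rw [Set.mem_singleton_iff] at h; exact h ▸ hg
    have hbG : b ∉ G := by rw [hGu']; exact fun h => hbu' h
    have := hGfort.2.2 b hbA hbG
    apply this
    have heq : T.neighborSet b ∩ G = {u'} := by
      rw [hGu']
      apply Set.eq_of_subset_of_subset
      · exact Set.inter_subset_right
      · rintro x hx
        rw [Set.mem_singleton_iff] at hx
        subst hx
        exact ⟨hadjbu', rfl⟩
    rw [heq]
    exact Set.ncard_singleton _

lemma priv_descend {v : V} : ∀ m, v ∈ ZF.remSet T m → Priv T (ZF.remSet T m) v →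
    Priv T (ZF.remSet T 0) v := by
  intro m
  induction m with
  | zero => exact fun _ h => h
  | succ n ih =>
    intro hv h
    exact ih (ZFtest.remSet_succ_subset T n hv) (priv_lift h)

lemma in_minimal_of_priv {v : V} (h : Priv T Set.univ v) :
    ∃ S, ZF.IsMinimalZFS T S ∧ v ∈ S := by
  obtain ⟨F, hFfort, hvF, hFpriv⟩ := h
  set S := Fᶜ ∪ {v} with hSdef
  have hSF : S ∩ F = {v} := by
    apply Set.eq_of_subset_of_subset
    · rintro x ⟨hx | hx, hxF⟩
      · exact absurd hxF hx
      · exact hx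
    · rintro x hx
      rw [Set.mem_singleton_iff] at hx
      subst hx
      exact ⟨Or.inr rfl, hvF⟩
  have hSzfs : ZF.IsZFS T S := by
    apply ZF.zfs_of_hits_forts
    intro G hGfort
    by_contra hne
    rw [Set.not_nonempty_iff_eq_empty] at hne
    have hGsub : G ⊆ F := by
      intro x hx
      by_contra hxF
      exact Set.eq_empty_iff_forall_notMem.1 hne x ⟨Or.inl hxF, hx⟩
    have hvG : v ∈ G := hFpriv G hGfort hGsub
    exact Set.eq_empty_iff_forall_notMem.1 hne v ⟨Or.inr rfl, hvG⟩
  obtain ⟨Z, hZS, hZmin⟩ := ZF.exists_minimal_zfs_subset hSzfs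
  refine ⟨Z, hZmin, ?_⟩
  obtain ⟨z, hz1, hz2⟩ := ZF.zfs_hits_fort hZmin.1 hFfort
  have : z ∈ S ∩ F := ⟨hZS hz1, hz2⟩
  rw [hSF] at this
  rw [Set.mem_singleton_iff] at this
  exact this ▸ hz1

end ZF4
namespace ZF5
open SimpleGraph
variable {V : Type*} {T : SimpleGraph V}

def reachIn (T : SimpleGraph V) (A : Set V) (a b : V) : Prop :=
  ∃ p : T.Walk a b, ∀ z ∈ p.support, z ∈ A

lemma reachIn_mem_left {A : Set V} {a b : V} (h : reachIn T A a b) : a ∈ A := by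
  obtain ⟨p, hp⟩ := h; exact hp a p.start_mem_support

lemma reachIn_mem_right {A : Set V} {a b : V} (h : reachIn T A a b) : b ∈ A := by
  obtain ⟨p, hp⟩ := h; exact hp b p.end_mem_support

lemma reachIn_refl {A : Set V} {a : V} (h : a ∈ A) : reachIn T A a a :=
  ⟨SimpleGraph.Walk.nil, by intro z hz; simp [SimpleGraph.Walk.support_nil] at hz; exact hz ▸ h⟩

lemma reachIn_extend {A : Set V} {a b c : V} (h : reachIn T A a b) (hadj : T.Adj b c)
    (hc : c ∈ A) : reachIn T A a c := by
  obtain ⟨p, hp⟩ := h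
  refine ⟨p.append (SimpleGraph.Walk.cons hadj SimpleGraph.Walk.nil), ?_⟩
  intro z hz
  rw [SimpleGraph.Walk.support_append] at hz
  rcases List.mem_append.1 hz with h | h
  · exact hp z h
  · simp [SimpleGraph.Walk.support_cons, SimpleGraph.Walk.support_nil] at h
    exact h ▸ hc

lemma reachIn_symm {A : Set V} {a b : V} (h : reachIn T A a b) : reachIn T A b a := by
  obtain ⟨p, hp⟩ := h
  refine ⟨p.reverse, ?_⟩
  intro z hz
  rw [SimpleGraph.Walk.support_reverse, List.mem_reverse] at hz
  exact hp z hz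

lemma reachIn_trans {A : Set V} {a b c : V} (h1 : reachIn T A a b) (h2 : reachIn T A b c) :
    reachIn T A a c := by
  obtain ⟨p, hp⟩ := h1
  obtain ⟨q, hq⟩ := h2
  refine ⟨p.append q, ?_⟩
  intro z hz
  rw [SimpleGraph.Walk.support_append] at hz
  rcases List.mem_append.1 hz with h | h
  · exact hp z h
  · exact hq z (List.mem_of_mem_tail h)

lemma reachIn_avoid (hT : T.IsAcyclic) {A : Set V} {v a b : V} (hva : T.Adj v a)
    (hvb : T.Adj v b) (hab : a ≠ b) (hv : v ∉ A) (h : reachIn T A a b) : False := by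
  obtain ⟨p, hp⟩ := h
  exact ZFtest.no_avoid_walk hT hva hvb hab p (fun hmem => hv (hp v hmem))

lemma reachIn_stuck {A : Set V} {a b : V} (h : reachIn T A a b)
    (h2 : ∀ c, T.Adj a c → c ∉ A) : b = a := by
  obtain ⟨p, hp⟩ := h
  cases p with
  | nil => rfl
  | @cons _ c _ hadj q =>
    exfalso
    refine h2 c hadj (hp c ?_)
    rw [SimpleGraph.Walk.support_cons]
    exact List.mem_cons_of_mem _ q.start_mem_support

lemma reachIn_of_mem_support {A : Set V} {a b r : V} (p : T.Walk a b)
    (hp : ∀ z ∈ p.support, z ∈ A) (hr : r ∈ p.support) : reachIn T A a r := by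
  classical
  exact ⟨p.takeUntil r hr, fun z hz => hp z (SimpleGraph.Walk.support_takeUntil_subset p hr hz)⟩

end ZF5
namespace ZF5b
open SimpleGraph ZF5
variable {V : Type*} [Fintype V] {T : SimpleGraph V}
set_option linter.unusedSectionVars false
set_option maxHeartbeats 2000000

def Hyp (T : SimpleGraph V) (A : Set V) (r : V) : Prop :=
  ∀ x ∈ A, ∀ l1 l2, l1 ≠ r → l2 ≠ r → l1 ∈ T.neighborSet x ∩ A → l2 ∈ T.neighborSet x ∩ A →
    T.neighborSet l1 ∩ A = {x} → T.neighborSet l2 ∩ A = {x} → l1 = l2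

lemma FFL (hT : T.IsAcyclic) :
    ∀ n (A : Set V) (r : V), A.ncard ≤ n → r ∈ A → Hyp T A r →
    ∃ F, ZF.FortOn T A F ∧ r ∈ F ∧
      (∀ x, x ∈ T.neighborSet r ∩ F → T.neighborSet x ∩ A = {r}) ∧
      (∀ G, ZF.FortOn T A G → G ⊆ F → r ∈ G) := by
  intro n
  induction n with
  | zero =>
    intro A r hcard hr _
    have : 0 < A.ncard := (Set.ncard_pos (Set.toFinite A)).2 ⟨r, hr⟩
    omega
  | succ n ih =>
    intro A r hcard hr hH
    by_cases hnb : ∃ y, y ∈ T.neighborSet r ∩ A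
    swap
    · -- isolated root
      push_neg at hnb
      refine ⟨{r}, ⟨⟨r, rfl⟩, Set.singleton_subset_iff.2 hr, ?_⟩, rfl, ?_, ?_⟩
      · intro y hyA hyF
        have heq : T.neighborSet y ∩ {r} = ∅ := by
          rw [Set.eq_empty_iff_forall_notMem]
          rintro x ⟨hxN, hx⟩
          rw [Set.mem_singleton_iff] at hx
          subst hx
          exact hnb y ⟨(hxN : T.Adj y x).symm, hyA⟩
        rw [heq]; simp
      · rintro x ⟨hxN, hx⟩
        rw [Set.mem_singleton_iff] at hx
        subst hx
        exact absurd (hxN : T.Adj x x) (T.irrefl)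
      · intro G hG hsub
        obtain ⟨g, hg⟩ := hG.1
        have := hsub hg
        rw [Set.mem_singleton_iff] at this
        exact this ▸ hg
    · obtain ⟨y, hyN, hyA⟩ := hnb
      have hadjry : T.Adj r y := hyN
      have hyr : y ≠ r := fun h => T.irrefl (h ▸ hadjry : T.Adj r r)
      set D := {x | reachIn T (A \ {r}) y x} with hD
      have hyD : y ∈ D := reachIn_refl ⟨hyA, hyr⟩
      have hDsub : D ⊆ A \ {r} := fun x hx => reachIn_mem_right hx
      have hrD : r ∉ D := fun h => (hDsub h).2 rfl
      have hDbound : ∀ x ∈ A, x ∉ D → x ≠ r → ∀ d ∈ D, ¬ T.Adj x d := by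
        intro x hxA hxD hxr d hd hadj
        exact hxD (reachIn_extend hd hadj.symm ⟨hxA, hxr⟩)
      have hrDnbr : ∀ d ∈ D, T.Adj r d → d = y := by
        intro d hd hadj
        by_contra hne
        exact reachIn_avoid hT hadjry hadj (fun h => hne h.symm) (fun h => h.2 rfl) hd
      set A' := A \ D with hA'
      have hrA' : r ∈ A' := ⟨hr, hrD⟩
      have hA'card : A'.ncard < A.ncard :=
        Set.ncard_lt_ncard ⟨Set.diff_subset, fun hts => (hts hyA).2 hyD⟩ (Set.toFinite A)
      have hA'leaf : ∀ l, l ∈ A' → l ≠ r → T.neighborSet l ∩ A' = T.neighborSet l ∩ A := by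
        intro l hl hlr
        apply Set.eq_of_subset_of_subset
        · exact Set.inter_subset_inter_right _ Set.diff_subset
        · rintro x ⟨hxN, hxA⟩
          refine ⟨hxN, hxA, ?_⟩
          intro hxD
          exact hDbound l hl.1 hl.2 hlr x hxD hxN
      have hHypA' : Hyp T A' r := by
        intro x hx l1 l2 h1r h2r h1 h2 hs1 hs2
        have e1 : T.neighborSet l1 ∩ A = {x} := by
          rw [← hA'leaf l1 h1.2 h1r]; exact hs1
        have e2 : T.neighborSet l2 ∩ A = {x} := by
          rw [← hA'leaf l2 h2.2 h2r]; exact hs2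
        exact hH x hx.1 l1 l2 h1r h2r ⟨h1.1, h1.2.1⟩ ⟨h2.1, h2.2.1⟩ e1 e2
      obtain ⟨F₂, hF₂fort, hrF₂, hinv₂, hpriv₂⟩ := ih A' r (by omega) hrA' hHypA'
      have hF₂A' : F₂ ⊆ A' := hF₂fort.2.1
      by_cases hyleaf : T.neighborSet y ∩ A = {r}
      · -- LEAF CASE : D = {y}
        have hDy : D = {y} := by
          apply Set.eq_of_subset_of_subset
          · intro d hd
            have : d = y := by
              refine reachIn_stuck hd ?_
              intro c hadj hcA
              have : c ∈ T.neighborSet y ∩ A := ⟨hadj, hcA.1⟩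
              rw [hyleaf] at this
              exact hcA.2 this
            exact this ▸ rfl
          · intro d hd
            rw [Set.mem_singleton_iff] at hd
            exact hd ▸ hyD
        set F := F₂ ∪ {y} with hFdef
        have hyA'not : y ∉ A' := fun h => h.2 hyD
        have hyF₂ : y ∉ F₂ := fun h => hyA'not (hF₂A' h)
        refine ⟨F, ⟨⟨r, Or.inl hrF₂⟩, ?_, ?_⟩, Or.inl hrF₂, ?_, ?_⟩
        · rintro x (hx | hx)
          · exact ((hF₂A' hx).1)
          · rw [Set.mem_singleton_iff] at hx; exact hx ▸ hyA
        · intro x hxA hxF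
          have hxy : x ≠ y := fun h => hxF (Or.inr (h ▸ rfl))
          have hxA' : x ∈ A' := ⟨hxA, by rw [hDy]; simpa using hxy⟩
          have hxF₂ : x ∉ F₂ := fun h => hxF (Or.inl h)
          have heq : T.neighborSet x ∩ F = T.neighborSet x ∩ F₂ := by
            apply Set.eq_of_subset_of_subset
            · rintro d ⟨hdN, hd | hd⟩
              · exact ⟨hdN, hd⟩
              · exfalso
                rw [Set.mem_singleton_iff] at hd
                subst hd
                have : x ∈ T.neighborSet d ∩ A := ⟨(hdN : T.Adj x d).symm, hxA⟩
                rw [hyleaf] at this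
                rw [Set.mem_singleton_iff] at this
                exact hxF (Or.inl (this ▸ hrF₂))
            · rintro d ⟨hdN, hd⟩; exact ⟨hdN, Or.inl hd⟩
          rw [heq]
          exact hF₂fort.2.2 x hxA' hxF₂
        · rintro x ⟨hxN, hx | hx⟩
          · have hxr : x ≠ r := fun h => T.irrefl (h ▸ hxN : T.Adj x x)
            have := hinv₂ x ⟨hxN, hx⟩
            rw [hA'leaf x (hF₂A' hx) hxr] at this
            exact this
          · rw [Set.mem_singleton_iff] at hx
            exact hx ▸ hyleaf
        · intro G hG hsub
          by_cases hyG : y ∈ G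
          · by_contra hrG
            have h1 := hG.2.2 r hr hrG
            have hyrG : y ∈ T.neighborSet r ∩ G := ⟨hyN, hyG⟩
            obtain ⟨a, haG, hay⟩ := ZF4.exists_other hyrG h1
            have haF₂ : a ∈ F₂ := by
              rcases hsub haG.2 with h | h
              · exact h
              · rw [Set.mem_singleton_iff] at h; exact absurd h hay
            have har : a ≠ r := fun h => T.irrefl (h ▸ haG.1 : T.Adj r r)
            have hanbr : T.neighborSet a ∩ A = {r} := by
              have := hinv₂ a ⟨haG.1, haF₂⟩
              rw [hA'leaf a (hF₂A' haF₂) har] at this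
              exact this
            exact hay (hH r hr a y har hyr ⟨haG.1, (hF₂A' haF₂).1⟩ ⟨hyN, hyA⟩ hanbr hyleaf)
          · have hGF₂ : G ⊆ F₂ := by
              intro g hg
              rcases hsub hg with h | h
              · exact h
              · rw [Set.mem_singleton_iff] at h; exact absurd (h ▸ hg) hyG
            have hGfortA' : ZF.FortOn T A' G :=
              ⟨hG.1, hGF₂.trans hF₂A', fun x hx hxG => hG.2.2 x hx.1 hxG⟩
            exact hpriv₂ G hGfortA' hGF₂
      · -- NON-LEAF CASE
        have hzex : ∃ z, z ∈ T.neighborSet y ∩ A ∧ z ≠ r := by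
          by_contra h
          push_neg at h
          exact hyleaf (Set.eq_singleton_iff_unique_mem.2
            ⟨⟨hadjry.symm, hr⟩, fun z hz => by
              by_contra hzr
              exact hzr (h z hz)⟩)
        obtain ⟨z, ⟨hzN, hzA⟩, hzr⟩ := hzex
        have hadjyz : T.Adj y z := hzN
        have hzy : z ≠ y := fun h => T.irrefl (h ▸ hadjyz : T.Adj y y)
        set C := {x | reachIn T (A \ {y}) z x} with hC
        have hzC : z ∈ C := reachIn_refl ⟨hzA, hzy⟩
        have hCsub : C ⊆ A \ {y} := fun x hx => reachIn_mem_right hx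
        have hyC : y ∉ C := fun h => (hCsub h).2 rfl
        have hrC : r ∉ C := by
          intro h
          exact reachIn_avoid hT hadjyz hadjry.symm hzr (fun hm => hm.2 rfl) h
        have hCbound : ∀ x ∈ A, x ∉ C → x ≠ y → ∀ c ∈ C, ¬ T.Adj x c := by
          intro x hxA hxC hxy c hc hadj
          exact hxC (reachIn_extend hc hadj.symm ⟨hxA, hxy⟩)
        have hyCnbr : ∀ c ∈ C, T.Adj y c → c = z := by
          intro c hc hadj
          by_contra hne
          exact reachIn_avoid hT hadjyz hadj (fun h => hne h.symm) (fun h => h.2 rfl) hc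
        have hCD : C ⊆ D := by
          intro x hx
          obtain ⟨p, hp⟩ := hx
          have hrp : r ∉ p.support := fun hrmem => hrC (reachIn_of_mem_support p hp hrmem)
          refine ⟨SimpleGraph.Walk.cons hadjyz p, ?_⟩
          intro w hw
          rw [SimpleGraph.Walk.support_cons] at hw
          rcases List.mem_cons.1 hw with hw | hw
          · exact hw ▸ ⟨hyA, hyr⟩
          · exact ⟨(hp w hw).1, fun hcon => hrp (hcon ▸ hw)⟩
        have hCcard : C.ncard < A.ncard :=
          Set.ncard_lt_ncard ⟨fun x hx => (hCsub hx).1, fun hts => hrC (hts hr)⟩ (Set.toFinite A)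
        have hHypC : Hyp T C z := by
          intro x hx l1 l2 h1z h2z h1 h2 hs1 hs2
          have key : ∀ l, l ≠ z → l ∈ T.neighborSet x ∩ C → T.neighborSet l ∩ C = {x} →
              T.neighborSet l ∩ A = {x} := by
            intro l hlz hl hsl
            apply Set.eq_of_subset_of_subset
            · rintro d ⟨hdN, hdA⟩
              have hdy : d ≠ y := by
                rintro rfl
                exact hlz (hyCnbr l hl.2 (hdN : T.Adj l d).symm)
              have hdC : d ∈ C := reachIn_extend hl.2 hdN ⟨hdA, hdy⟩
              have : d ∈ T.neighborSet l ∩ C := ⟨hdN, hdC⟩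
              rw [hsl] at this
              exact this
            · rintro d hd
              rw [Set.mem_singleton_iff] at hd
              subst hd
              exact ⟨(hl.1 : T.Adj d l).symm, (hCsub hx).1⟩
          have e1 := key l1 h1z h1 hs1
          have e2 := key l2 h2z h2 hs2
          have h1r : l1 ≠ r := fun h => hrC (h ▸ h1.2)
          have h2r : l2 ≠ r := fun h => hrC (h ▸ h2.2)
          exact hH x (hCsub hx).1 l1 l2 h1r h2r ⟨h1.1, (hCsub h1.2).1⟩ ⟨h2.1, (hCsub h2.2).1⟩ e1 e2
        obtain ⟨F₁, hF₁fort, hzF₁, hinv₁, hpriv₁⟩ := ih C z (by omega) hzC hHypC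
        have hF₁C : F₁ ⊆ C := hF₁fort.2.1
        set F := F₂ ∪ F₁ with hFdef
        have hyF₂ : y ∉ F₂ := fun h => (hF₂A' h).2 hyD
        have hyF₁ : y ∉ F₁ := fun h => hyC (hF₁C h)
        have hyF : y ∉ F := fun h => h.elim hyF₂ hyF₁
        have hA'Dnoadj : ∀ x, x ∈ A' → x ≠ r → ∀ d ∈ D, ¬T.Adj x d :=
          fun x hx hxr => hDbound x hx.1 hx.2 hxr
        have hNyF : T.neighborSet y ∩ F = {r, z} := by
          apply Set.eq_of_subset_of_subset
          · rintro d ⟨hdN, hd | hd⟩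
            · by_cases hdr : d = r
              · exact Or.inl hdr
              · exact absurd (hdN : T.Adj y d).symm (hA'Dnoadj d (hF₂A' hd) hdr y hyD)
            · exact Or.inr (hyCnbr d (hF₁C hd) hdN)
          · rintro d (hd | hd)
            · subst hd; exact ⟨hadjry.symm, Or.inl hrF₂⟩
            · rw [Set.mem_singleton_iff] at hd; subst hd; exact ⟨hzN, Or.inr hzF₁⟩
        refine ⟨F, ⟨⟨r, Or.inl hrF₂⟩, ?_, ?_⟩, Or.inl hrF₂, ?_, ?_⟩
        · rintro x (hx | hx)
          · exact (hF₂A' hx).1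
          · exact (hCsub (hF₁C hx)).1
        · intro x hxA hxF
          by_cases hxy : x = y
          · subst hxy
            rw [hNyF, Set.ncard_pair (Ne.symm hzr)]
            omega
          · by_cases hxC : x ∈ C
            · have hxF₁ : x ∉ F₁ := fun h => hxF (Or.inr h)
              have heq : T.neighborSet x ∩ F = T.neighborSet x ∩ F₁ := by
                apply Set.eq_of_subset_of_subset
                · rintro d ⟨hdN, hd | hd⟩
                  · exfalso
                    by_cases hdr : d = r
                    · subst hdr
                      exact hxy (hrDnbr x (hCD hxC) (hdN : T.Adj x d).symm)
                    · exact hA'Dnoadj d (hF₂A' hd) hdr x (hCD hxC) (hdN : T.Adj x d).symm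
                  · exact ⟨hdN, hd⟩
                · rintro d ⟨hdN, hd⟩; exact ⟨hdN, Or.inr hd⟩
              rw [heq]
              exact hF₁fort.2.2 x hxC hxF₁
            · by_cases hxD : x ∈ D
              · have heq : T.neighborSet x ∩ F = ∅ := by
                  rw [Set.eq_empty_iff_forall_notMem]
                  rintro d ⟨hdN, hd | hd⟩
                  · by_cases hdr : d = r
                    · subst hdr
                      exact hxy (hrDnbr x hxD (hdN : T.Adj x d).symm)
                    · exact hA'Dnoadj d (hF₂A' hd) hdr x hxD (hdN : T.Adj x d).symm
                  · exact hCbound x hxA hxC hxy d (hF₁C hd) hdN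
                rw [heq]; simp
              · have hxA' : x ∈ A' := ⟨hxA, hxD⟩
                have hxF₂ : x ∉ F₂ := fun h => hxF (Or.inl h)
                have hxr : x ≠ r := fun h => hxF (Or.inl (h ▸ hrF₂))
                have heq : T.neighborSet x ∩ F = T.neighborSet x ∩ F₂ := by
                  apply Set.eq_of_subset_of_subset
                  · rintro d ⟨hdN, hd | hd⟩
                    · exact ⟨hdN, hd⟩
                    · exact absurd hdN (hA'Dnoadj x hxA' hxr d (hCD (hF₁C hd)))
                  · rintro d ⟨hdN, hd⟩; exact ⟨hdN, Or.inl hd⟩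
                rw [heq]
                exact hF₂fort.2.2 x hxA' hxF₂
        · rintro x ⟨hxN, hx | hx⟩
          · have hxr : x ≠ r := fun h => T.irrefl (h ▸ hxN : T.Adj x x)
            have := hinv₂ x ⟨hxN, hx⟩
            rw [hA'leaf x (hF₂A' hx) hxr] at this
            exact this
          · exfalso
            have := hrDnbr x (hCD (hF₁C hx)) hxN
            exact hyC (this ▸ hF₁C hx)
        · intro G hG hsub
          by_contra hrG
          have hzG : z ∉ G := by
            intro hzG
            have h1 := hG.2.2 y hyA (fun h => hyF (hsub h))
            apply h1
            have heq : T.neighborSet y ∩ G = {z} := by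
              apply Set.eq_of_subset_of_subset
              · rintro d ⟨hdN, hdG⟩
                have : d ∈ T.neighborSet y ∩ F := ⟨hdN, hsub hdG⟩
                rw [hNyF] at this
                rcases this with h | h
                · exact absurd (h ▸ hdG) hrG
                · exact h
              · rintro d hd
                rw [Set.mem_singleton_iff] at hd
                exact hd ▸ ⟨hzN, hzG⟩
            rw [heq]
            exact Set.ncard_singleton _
          have hGC : G ∩ C = ∅ := by
            by_contra hne
            rw [← Ne, ← Set.nonempty_iff_ne_empty] at hne
            have hGCF₁ : G ∩ C ⊆ F₁ := by
              rintro x ⟨hxG, hxC⟩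
              rcases hsub hxG with h | h
              · exact absurd (hCD hxC) (hF₂A' h).2
              · exact h
            have hfortC : ZF.FortOn T C (G ∩ C) := by
              refine ⟨hne, Set.inter_subset_right, ?_⟩
              intro x hxC hxGC
              have hxG : x ∉ G := fun h => hxGC ⟨h, hxC⟩
              have heq : T.neighborSet x ∩ (G ∩ C) = T.neighborSet x ∩ G := by
                apply Set.eq_of_subset_of_subset
                · exact Set.inter_subset_inter_right _ Set.inter_subset_left
                · rintro d ⟨hdN, hdG⟩
                  refine ⟨hdN, hdG, ?_⟩
                  rcases hsub hdG with h | h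
                  · exfalso
                    by_cases hdr : d = r
                    · exact hrG (hdr ▸ hdG)
                    · exact hA'Dnoadj d (hF₂A' h) hdr x (hCD hxC) (hdN : T.Adj x d).symm
                  · exact hF₁C h
              rw [heq]
              exact hG.2.2 x (hCsub hxC).1 hxG
            exact hzG (hpriv₁ (G ∩ C) hfortC hGCF₁).1
          have hGF₂ : G ⊆ F₂ := by
            intro g hg
            rcases hsub hg with h | h
            · exact h
            · exact absurd (Set.eq_empty_iff_forall_notMem.1 hGC g ⟨hg, hF₁C h⟩) not_false
          have hGfortA' : ZF.FortOn T A' G :=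
            ⟨hG.1, hGF₂.trans hF₂A', fun x hx hxG => hG.2.2 x hx.1 hxG⟩
          exact hrG (hpriv₂ G hGfortA' hGF₂)

end ZF5b

/-- In a tree `T`, a vertex `v` belongs to no minimal zero forcing set
of `T` if and only if `v` is a `B`-vertex of `T`. -/
theorem tree_irrelevant_iff_bvertex {V : Type*} [Fintype V] (T : SimpleGraph V)
    (hT : T.IsTree) (v : V) :
    (∀ S : Set V, IsMinimalZFS T S → v ∉ S) ↔ IsBVertex T v := by
  classical
  have h0 : ZF.remSet T 0 = Set.univ := rfl
  constructor
  · intro hLHS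
    by_contra hnB
    have hnB' : ∀ i, v ∉ ZF.bstep T (ZF.remSet T i) := fun i h => hnB ⟨i, h⟩
    have hpriv : ZF4.Priv T (ZF.remSet T 0) v := by
      by_cases hrem : ∃ k, v ∉ ZF.remSet T k
      · have hk₀ : v ∉ ZF.remSet T (Nat.find hrem) := Nat.find_spec hrem
        have hk₀0 : Nat.find hrem ≠ 0 := by
          intro h
          rw [h, h0] at hk₀
          exact hk₀ (Set.mem_univ v)
        obtain ⟨j, hj⟩ : ∃ j, Nat.find hrem = j + 1 := ⟨Nat.find hrem - 1, by omega⟩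
        have hvj : v ∈ ZF.remSet T j := by
          by_contra h
          exact (Nat.find_min hrem (by omega)) h
        have hvj1 : v ∉ ZF.remSet T (j + 1) := hj ▸ hk₀
        rcases ZFtest.removed_cases T hvj hvj1 with h | h
        · exact absurd h (hnB' j)
        · exact ZF4.priv_descend j hvj (ZF4.priv_pendant h)
      · push_neg at hrem
        obtain ⟨j, hjstable⟩ := ZFtest.exists_stable T
        have hbempty := ZFtest.bstep_empty_of_stable T hjstable
        have hHyp : ZF5b.Hyp T (ZF.remSet T j) v := by
          intro x hxA l1 l2 h1r h2r h1 h2 hs1 hs2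
          by_contra hne
          have hx : x ∈ ZF.bstep T (ZF.remSet T j) := ⟨hxA, l1, l2, hne, h1.2, h2.2, hs1, hs2⟩
          rw [hbempty] at hx
          exact hx
        obtain ⟨F, hfort, hvF, _, hprivF⟩ := ZF5b.FFL hT.IsAcyclic (ZF.remSet T j).ncard
          (ZF.remSet T j) v le_rfl (hrem j) hHyp
        exact ZF4.priv_descend j (hrem j) ⟨F, hfort, hvF, hprivF⟩
    rw [h0] at hpriv
    obtain ⟨S, hSmin, hvS⟩ := ZF4.in_minimal_of_priv hpriv
    exact hLHS S hSmin hvS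
  · intro hB S hS
    exact ZF3.bvertex_not_in_minimal hT.IsAcyclic hB hS
end

section
/- The path P_n is well-forced if and only if n ≤ 3. -/
open ZF SimpleGraph

lemma forced_mono {V : Type*} {G : SimpleGraph V} {S T : Set V} (hST : S ⊆ T) {v : V}
    (h : Forced G S v) : Forced G T v := by
  induction h with
  | init h => exact Forced.init (hST h)
  | force hu hadj hx ihu ihx => exact Forced.force ihu hadj ihx

lemma not_forced_empty {V : Type*} {G : SimpleGraph V} {v : V}
    (h : Forced G (∅ : Set V) v) : False := by
  induction h with
  | init h => exact h
  | force hu hadj hx ihu ihx => exact ihu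

/-- Forcing from a single interior vertex gets stuck. -/
lemma forced_interior {n : ℕ} {v : Fin n} (h1 : 0 < v.val) (h2 : v.val + 1 < n) {w : Fin n}
    (h : Forced (pathGraph n) {v} w) : w = v := by
  induction h with
  | init h => exact h
  | @force u w hu hadj hx ihu ihx =>
    subst ihu
    exfalso
    have hva : (pathGraph n).Adj u ⟨u.val - 1, by omega⟩ := by
      rw [pathGraph_adj]; right; show u.val - 1 + 1 = u.val; omega
    have hvb : (pathGraph n).Adj u ⟨u.val + 1, h2⟩ := by
      rw [pathGraph_adj]; left; rfl
    by_cases hw : w = (⟨u.val - 1, by omega⟩ : Fin n)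
    · have hne : (⟨u.val + 1, h2⟩ : Fin n) ≠ w := by
        subst hw; intro hh
        have : u.val + 1 = u.val - 1 := Fin.val_eq_of_eq hh
        omega
      have := Fin.val_eq_of_eq (ihx ⟨u.val + 1, h2⟩ hvb hne)
      simp at this
    · have := Fin.val_eq_of_eq (ihx ⟨u.val - 1, by omega⟩ hva (Ne.symm hw))
      simp at this
      omega

/-- If all vertices up to index `m` are forced, the whole path is forced. -/
lemma zfs_of_low {n m : ℕ} {S : Set (Fin n)}
    (h : ∀ j : Fin n, j.val ≤ m → Forced (pathGraph n) S j) :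
    IsZFS (pathGraph n) S := by
  have key : ∀ k : ℕ, ∀ hk : k < n, Forced (pathGraph n) S ⟨k, hk⟩ := by
    intro k
    induction k using Nat.strong_induction_on with
    | _ k ih =>
      intro hk
      by_cases hkm : k ≤ m
      · exact h ⟨k, hk⟩ hkm
      · have hk1 : 0 < k := by omega
        refine Forced.force (u := ⟨k - 1, by omega⟩) (ih (k - 1) (by omega) (by omega)) ?_ ?_
        · rw [pathGraph_adj]; left; show k - 1 + 1 = k; omega
        · intro x hadj hne
          rw [pathGraph_adj] at hadj
          have hadj' : k - 1 + 1 = x.val ∨ x.val + 1 = k - 1 := hadj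
          have hxk : x.val ≠ k := by
            intro hh
            exact hne (Fin.ext hh)
          have hlt : x.val < k := by omega
          have := ih x.val hlt x.isLt
          have hx : (⟨x.val, x.isLt⟩ : Fin n) = x := Fin.eta x x.isLt
          rwa [hx] at this
  intro v
  have hv : (⟨v.val, v.isLt⟩ : Fin n) = v := Fin.eta v v.isLt
  rw [← hv]; exact key v.val v.isLt

lemma zfs_zero {n : ℕ} (hn : 0 < n) : IsZFS (pathGraph n) {⟨0, hn⟩} := by
  apply zfs_of_low (m := 0)
  intro j hj
  have : j = (⟨0, hn⟩ : Fin n) := by apply Fin.ext; simpa using hj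
  exact Forced.init (by simp [this])

lemma zfs_not_empty {n : ℕ} (hn : 0 < n) : ¬ IsZFS (pathGraph n) (∅ : Set (Fin n)) :=
  fun h => not_forced_empty (h ⟨0, hn⟩)

lemma zfNum_path_one {n : ℕ} (hn : 0 < n) : zfNum (pathGraph n) = 1 := by
  have h1 : (1 : ℕ) ∈ {k | ∃ S : Set (Fin n), IsZFS (pathGraph n) S ∧ S.ncard = k} :=
    ⟨{⟨0, hn⟩}, zfs_zero hn, Set.ncard_singleton _⟩
  have h0 : (0 : ℕ) ∉ {k | ∃ S : Set (Fin n), IsZFS (pathGraph n) S ∧ S.ncard = k} := by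
    rintro ⟨S, hS, hc⟩
    have hSe : S = ∅ := (Set.ncard_eq_zero (Set.toFinite S)).mp hc
    exact zfs_not_empty hn (hSe ▸ hS)
  have hle : zfNum (pathGraph n) ≤ 1 := Nat.sInf_le h1
  have hne : zfNum (pathGraph n) ≠ 0 := by
    intro hz
    rcases Nat.sInf_eq_zero.mp hz with h | h
    · exact h0 h
    · rw [h] at h1; exact h1
  omega

lemma minimal_eq_of_subset {V : Type*} {G : SimpleGraph V} {S T : Set V}
    (hmin : IsMinimalZFS G S) (hT : IsZFS G T) (hsub : T ⊆ S) : S = T := by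
  by_contra hne
  exact hmin.2 T (hsub.ssubset_of_ne (fun h => hne h.symm)) hT

lemma zfs_one_P2 : IsZFS (pathGraph 2) {(⟨1, by omega⟩ : Fin 2)} := by
  apply zfs_of_low (m := 1)
  intro j hj
  by_cases h : j.val = 1
  · exact Forced.init (show j ∈ _ from Fin.ext h)
  · have hjlt := j.isLt
    have hj0 : j = ⟨0, by omega⟩ := Fin.ext ((by omega : j.val = 0))
    rw [hj0]
    refine Forced.force (u := (⟨1, by omega⟩ : Fin 2)) (Forced.init rfl) ?_ ?_
    · rw [pathGraph_adj]; right; rfl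
    · intro x hadj hne
      rw [pathGraph_adj] at hadj
      have h' : (1:ℕ) + 1 = x.val ∨ x.val + 1 = 1 := hadj
      have hxlt := x.isLt
      exact absurd (Fin.ext (by omega : x.val = 0)) hne

lemma zfs_two_P3 : IsZFS (pathGraph 3) {(⟨2, by omega⟩ : Fin 3)} := by
  have f2 : Forced (pathGraph 3) {(⟨2, by omega⟩ : Fin 3)} ⟨2, by omega⟩ := Forced.init rfl
  have f1 : Forced (pathGraph 3) {(⟨2, by omega⟩ : Fin 3)} ⟨1, by omega⟩ := by
    refine Forced.force (u := (⟨2, by omega⟩ : Fin 3)) f2 ?_ ?_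
    · rw [pathGraph_adj]; right; rfl
    · intro x hadj hne
      rw [pathGraph_adj] at hadj
      have h' : (2:ℕ) + 1 = x.val ∨ x.val + 1 = 2 := hadj
      have hxlt := x.isLt
      exact absurd (Fin.ext (by omega : x.val = 1)) hne
  have f0 : Forced (pathGraph 3) {(⟨2, by omega⟩ : Fin 3)} ⟨0, by omega⟩ := by
    refine Forced.force (u := (⟨1, by omega⟩ : Fin 3)) f1 ?_ ?_
    · rw [pathGraph_adj]; right; rfl
    · intro x hadj hne
      rw [pathGraph_adj] at hadj
      have h' : (1:ℕ) + 1 = x.val ∨ x.val + 1 = 1 := hadj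
      have hxlt := x.isLt
      have hx : x.val = 0 ∨ x.val = 2 := by omega
      rcases hx with hx | hx
      · exact absurd (Fin.ext hx) hne
      · exact Forced.init (show x ∈ _ from Fin.ext hx)
  apply zfs_of_low (m := 2)
  intro j hj
  have hjlt := j.isLt
  have : j.val = 0 ∨ j.val = 1 ∨ j.val = 2 := by omega
  rcases this with h | h | h
  · rw [show j = (⟨0, by omega⟩ : Fin 3) from Fin.ext h]; exact f0
  · rw [show j = (⟨1, by omega⟩ : Fin 3) from Fin.ext h]; exact f1
  · rw [show j = (⟨2, by omega⟩ : Fin 3) from Fin.ext h]; exact f2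

lemma zfs_12 {n : ℕ} (hn : 4 ≤ n) :
    IsZFS (pathGraph n) {⟨1, by omega⟩, ⟨2, by omega⟩} := by
  have f1 : Forced (pathGraph n) {⟨1, by omega⟩, ⟨2, by omega⟩} ⟨1, by omega⟩ :=
    Forced.init (Set.mem_insert _ _)
  have f2 : Forced (pathGraph n) {⟨1, by omega⟩, ⟨2, by omega⟩} ⟨2, by omega⟩ :=
    Forced.init (Set.mem_insert_of_mem _ rfl)
  have f0 : Forced (pathGraph n) {⟨1, by omega⟩, ⟨2, by omega⟩} ⟨0, by omega⟩ := by
    refine Forced.force (u := (⟨1, by omega⟩ : Fin n)) f1 ?_ ?_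
    · rw [pathGraph_adj]; right; rfl
    · intro x hadj hne
      rw [pathGraph_adj] at hadj
      have h' : (1:ℕ) + 1 = x.val ∨ x.val + 1 = 1 := hadj
      have hx : x.val = 0 ∨ x.val = 2 := by omega
      rcases hx with hx | hx
      · exact absurd (Fin.ext hx) hne
      · rw [show x = (⟨2, by omega⟩ : Fin n) from Fin.ext hx]; exact f2
  apply zfs_of_low (m := 2)
  intro j hj
  have : j.val = 0 ∨ j.val = 1 ∨ j.val = 2 := by omega
  rcases this with h | h | h
  · rw [show j = (⟨0, by omega⟩ : Fin n) from Fin.ext h]; exact f0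
  · rw [show j = (⟨1, by omega⟩ : Fin n) from Fin.ext h]; exact f1
  · rw [show j = (⟨2, by omega⟩ : Fin n) from Fin.ext h]; exact f2


/-- The path `P n` is well-forced if and only if `n ≤ 3`. -/
theorem path_wellforced_iff (n : ℕ) :
    WellForced (pathGraph n) ↔ n ≤ 3 := by
  constructor
  · intro hwf
    by_contra hn
    push_neg at hn
    have hn4 : 4 ≤ n := hn
    have hzfs : IsZFS (pathGraph n) {⟨1, by omega⟩, ⟨2, by omega⟩} := zfs_12 hn4
    have hmin : IsMinimalZFS (pathGraph n) {⟨1, by omega⟩, ⟨2, by omega⟩} := by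
      refine ⟨hzfs, ?_⟩
      intro S' hS' hS'zfs
      have hsub := hS'.1
      by_cases ha : (⟨1, by omega⟩ : Fin n) ∈ S' <;>
        by_cases hb : (⟨2, by omega⟩ : Fin n) ∈ S'
      · exact hS'.2 (Set.insert_subset ha (Set.singleton_subset_iff.mpr hb))
      · have hS'eq : S' = {(⟨1, by omega⟩ : Fin n)} := by
          apply Set.eq_singleton_iff_unique_mem.mpr
          refine ⟨ha, ?_⟩
          intro x hx
          rcases hsub hx with h | h
          · exact h
          · exact absurd (h ▸ hx) hb
        rw [hS'eq] at hS'zfs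
        have := forced_interior (v := (⟨1, by omega⟩ : Fin n)) (Nat.one_pos)
          (show 1 + 1 < n by omega) (hS'zfs ⟨0, by omega⟩)
        have := Fin.val_eq_of_eq this
        simp at this
      · have hS'eq : S' = {(⟨2, by omega⟩ : Fin n)} := by
          apply Set.eq_singleton_iff_unique_mem.mpr
          refine ⟨hb, ?_⟩
          intro x hx
          rcases hsub hx with h | h
          · exact absurd (h ▸ hx) ha
          · exact h
        rw [hS'eq] at hS'zfs
        have := forced_interior (v := (⟨2, by omega⟩ : Fin n)) (Nat.two_pos)
          (show 2 + 1 < n by omega) (hS'zfs ⟨0, by omega⟩)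
        have := Fin.val_eq_of_eq this
        simp at this
      · have hS'eq : S' = ∅ := by
          ext x
          simp only [Set.mem_empty_iff_false, iff_false]
          intro hx
          rcases hsub hx with h | h
          · exact ha (h ▸ hx)
          · exact hb (h ▸ hx)
        rw [hS'eq] at hS'zfs
        exact not_forced_empty (hS'zfs ⟨0, by omega⟩)
    have h2 : ({⟨1, by omega⟩, ⟨2, by omega⟩} : Set (Fin n)).ncard = 2 :=
      Set.ncard_pair (by intro h; have := Fin.val_eq_of_eq h; simp at this)
    have := hwf _ hmin
    rw [h2, zfNum_path_one (by omega)] at this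
    exact absurd this (by norm_num)
  · intro hn3
    interval_cases n
    · intro S hS
      have hS0 : S = ∅ := Set.eq_empty_of_isEmpty S
      have hz : zfNum (pathGraph 0) = 0 := by
        have h0 : (0:ℕ) ∈ {k | ∃ S : Set (Fin 0), IsZFS (pathGraph 0) S ∧ S.ncard = k} :=
          ⟨∅, fun v => v.elim0, by simp⟩
        exact Nat.eq_zero_of_le_zero (Nat.sInf_le h0)
      rw [hS0, hz]; simp
    · intro S hS
      rw [zfNum_path_one (by norm_num)]
      by_cases h0 : (⟨0, by norm_num⟩ : Fin 1) ∈ S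
      · rw [minimal_eq_of_subset hS (zfs_zero (by norm_num))
          (Set.singleton_subset_iff.mpr h0)]
        exact Set.ncard_singleton _
      · exfalso
        have hSe : S = ∅ := by
          ext x
          simp only [Set.mem_empty_iff_false, iff_false]
          intro hx
          have hxv := x.isLt
          have hx0 : x = (⟨0, by norm_num⟩ : Fin 1) := Fin.ext (by omega : x.val = 0)
          exact h0 (hx0 ▸ hx)
        exact not_forced_empty (hSe ▸ hS.1 ⟨0, by norm_num⟩)
    · intro S hS
      rw [zfNum_path_one (by norm_num)]
      by_cases h0 : (⟨0, by norm_num⟩ : Fin 2) ∈ S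
      · rw [minimal_eq_of_subset hS (zfs_zero (by norm_num))
          (Set.singleton_subset_iff.mpr h0)]
        exact Set.ncard_singleton _
      by_cases h1 : (⟨1, by norm_num⟩ : Fin 2) ∈ S
      · rw [minimal_eq_of_subset hS zfs_one_P2 (Set.singleton_subset_iff.mpr h1)]
        exact Set.ncard_singleton _
      · exfalso
        have hSe : S = ∅ := by
          ext x
          simp only [Set.mem_empty_iff_false, iff_false]
          intro hx
          have hxv := x.isLt
          have : x.val = 0 ∨ x.val = 1 := by omega
          rcases this with h | h
          · have hx0 : x = (⟨0, by norm_num⟩ : Fin 2) := Fin.ext h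
            exact h0 (hx0 ▸ hx)
          · have hx1 : x = (⟨1, by norm_num⟩ : Fin 2) := Fin.ext h
            exact h1 (hx1 ▸ hx)
        exact not_forced_empty (hSe ▸ hS.1 ⟨0, by norm_num⟩)
    · intro S hS
      rw [zfNum_path_one (by norm_num)]
      by_cases h0 : (⟨0, by norm_num⟩ : Fin 3) ∈ S
      · rw [minimal_eq_of_subset hS (zfs_zero (by norm_num))
          (Set.singleton_subset_iff.mpr h0)]
        exact Set.ncard_singleton _
      by_cases h2 : (⟨2, by norm_num⟩ : Fin 3) ∈ S
      · rw [minimal_eq_of_subset hS zfs_two_P3 (Set.singleton_subset_iff.mpr h2)]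
        exact Set.ncard_singleton _
      · exfalso
        have hsub : S ⊆ {(⟨1, by norm_num⟩ : Fin 3)} := by
          intro x hx
          have hxv := x.isLt
          have : x.val = 0 ∨ x.val = 1 ∨ x.val = 2 := by omega
          rcases this with h | h | h
          · exact absurd hx ((Fin.ext h : x = ⟨0, by norm_num⟩) ▸ h0)
          · exact (Fin.ext h : x = ⟨1, by norm_num⟩)
          · exact absurd hx ((Fin.ext h : x = ⟨2, by norm_num⟩) ▸ h2)
        have := forced_interior (v := (⟨1, by norm_num⟩ : Fin 3)) (Nat.one_pos)
          (show 1 + 1 < 3 by norm_num) (forced_mono hsub (hS.1 ⟨0, by norm_num⟩))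
        have := Fin.val_eq_of_eq this
        simp at this
end

section
/- If a graph G has a pendent path of length four or more, then G is not well-forced. -/
open ZF SimpleGraph

namespace ZF

variable {V : Type*} {G : SimpleGraph V}

def IsForcingClosed (G : SimpleGraph V) (C : Set V) : Prop :=
  ∀ ⦃u w⦄, u ∈ C → G.Adj u w → (∀ x, G.Adj u x → x ≠ w → x ∈ C) → w ∈ C

lemma isForcingClosed_setOf_forced (S : Set V) : IsForcingClosed G {v | Forced G S v} :=
  fun _ _ hu hadj hother => Forced.force hu hadj hother

lemma Forced.mem_of_isForcingClosed {S C : Set V} {v : V} (hSC : S ⊆ C)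
    (hC : IsForcingClosed G C) (hv : Forced G S v) : v ∈ C := by
  induction hv with
  | init hv => exact hSC hv
  | force _ hadj _ ihu ihother => exact hC ihu hadj ihother

lemma Forced.trans {S T : Set V} {v : V} (hT : ∀ t ∈ T, Forced G S t) (hv : Forced G T v) :
    Forced G S v :=
  hv.mem_of_isForcingClosed hT (isForcingClosed_setOf_forced S)

lemma Forced.mono {S T : Set V} {v : V} (hST : S ⊆ T) (hv : Forced G S v) : Forced G T v :=
  hv.trans fun _ hs => Forced.init (hST hs)

lemma IsZFS.mono {S T : Set V} (hS : IsZFS G S) (hST : S ⊆ T) : IsZFS G T :=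
  fun v => (hS v).mono hST

lemma IsZFS.of_forall_forced {S T : Set V} (hT : IsZFS G T) (h : ∀ t ∈ T, Forced G S t) :
    IsZFS G S :=
  fun v => (hT v).trans h

/-- Such a `v` never has a single white neighbor, and its neighbors never turn blue, so it takes
part in no force. -/
lemma Forced.eq_or_forced_of_insert {S : Set V} {v x y z : V} (hx : G.Adj v x) (hy : G.Adj v y)
    (hxy : x ≠ y) (hnbr : ∀ x, G.Adj v x → ¬ Forced G S x) (hz : Forced G (insert v S) z) :
    z = v ∨ Forced G S z := by
  refine hz.mem_of_isForcingClosed (C := insert v {w | Forced G S w})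
    (Set.insert_subset_insert fun _ => Forced.init) fun u w hu hadj hother => ?_
  rcases hu with rfl | hu
  · obtain ⟨t, htw, hvt⟩ : ∃ t ∈ ({x, y} : Set V), t ≠ w := by
      by_cases hxw : x = w
      · exact ⟨y, by simp, fun h => hxy (hxw.trans h.symm)⟩
      · exact ⟨x, by simp, hxw⟩
    have hvt_adj : G.Adj u t := by rcases htw with rfl | rfl <;> assumption
    rcases hother t hvt_adj hvt with h | h
    · exact absurd h (hvt_adj.ne.symm)
    · exact absurd h (hnbr t hvt_adj)
  · refine Or.inr (Forced.force hu hadj fun t ht htw => ?_)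
    rcases hother t ht htw with rfl | h
    · exact absurd hu (hnbr u ht.symm)
    · exact h

lemma isZFS_univ : IsZFS G (Set.univ : Set V) := fun _ => Forced.init trivial

lemma zfNum_le {S : Set V} (hS : IsZFS G S) : zfNum G ≤ S.ncard :=
  Nat.sInf_le ⟨S, hS, rfl⟩

lemma exists_isZFS_ncard_eq_zfNum (G : SimpleGraph V) : ∃ S, IsZFS G S ∧ S.ncard = zfNum G :=
  Nat.sInf_mem (s := {n | ∃ S : Set V, IsZFS G S ∧ S.ncard = n})
    ⟨Set.univ.ncard, Set.univ, isZFS_univ, rfl⟩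

lemma IsZFS.isMinimalZFS_of_ncard_le [Finite V] {S : Set V} (hS : IsZFS G S)
    (h : S.ncard ≤ zfNum G) : IsMinimalZFS G S :=
  ⟨hS, fun _ hlt hS' => (Set.ncard_lt_ncard hlt).not_ge (h.trans (zfNum_le hS'))⟩

lemma isMinimalZFS_iff {S : Set V} :
    IsMinimalZFS G S ↔ IsZFS G S ∧ ∀ x ∈ S, ¬ IsZFS G (S \ {x}) := by
  refine ⟨fun h => ⟨h.1, fun x hx => h.2 _ (Set.sdiff_singleton_ssubset.2 hx)⟩,
    fun h => ⟨h.1, fun S' hS' hzS' => ?_⟩⟩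
  obtain ⟨x, hxS, hxS'⟩ := Set.exists_of_ssubset hS'
  exact h.2 x hxS (hzS'.mono fun v hv => ⟨hS'.subset hv, fun hvx => hxS' (hvx ▸ hv)⟩)

/-- `Chronology G S C U`: a sequence of forces starting from the blue set `S` ends with the blue
set `C`, and `U` is the set of vertices that performed one of these forces. -/
inductive Chronology (G : SimpleGraph V) (S : Set V) : Set V → Set V → Prop
  | nil : Chronology G S S ∅
  | snoc {C U : Set V} {u w : V} : Chronology G S C U → u ∈ C → w ∉ C → G.Adj u w →
      (∀ x, G.Adj u x → x ≠ w → x ∈ C) → Chronology G S (insert w C) (insert u U)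

namespace Chronology

variable {S C U : Set V}

lemma forcers_subset (h : Chronology G S C U) : U ⊆ C := by
  induction h with
  | nil => exact Set.empty_subset _
  | snoc _ hu _ _ _ ih =>
    exact Set.insert_subset (Set.mem_insert_of_mem _ hu) (ih.trans (Set.subset_insert _ _))

lemma adj_mem (h : Chronology G S C U) {u x : V} (hu : u ∈ U) (hx : G.Adj u x) : x ∈ C := by
  induction h with
  | nil => exact absurd hu (Set.notMem_empty u)
  | @snoc C U u' w _ _ _ _ hother ih =>
    rcases hu with rfl | hu
    · by_cases hxw : x = w
      · exact hxw ▸ Set.mem_insert _ _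
      · exact Set.mem_insert_of_mem _ (hother x hx hxw)
    · exact Set.mem_insert_of_mem _ (ih hu)

lemma ncard_eq [Finite V] (h : Chronology G S C U) : C.ncard = S.ncard + U.ncard := by
  induction h with
  | nil => simp
  | @snoc C U u w hCU _ hw hadj _ ih =>
    have hu : u ∉ U := fun hu => hw (hCU.adj_mem hu hadj)
    rw [Set.ncard_insert_of_notMem hw, Set.ncard_insert_of_notMem hu, ih, add_assoc]

/-- Reversal: running the chronology backwards, each `w` forces the `u` that forced it. -/
lemma isZFS_compl (h : Chronology G S C U) : IsZFS G Uᶜ := by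
  induction h with
  | nil => simpa using isZFS_univ
  | @snoc C U u w hCU _ hw hadj _ ih =>
    refine ih.of_forall_forced fun v hv => ?_
    by_cases hvu : v = u
    · subst hvu
      refine Forced.force (Forced.init ?_) hadj.symm fun x hx hxv => Forced.init ?_
      · rintro (rfl | hwU)
        · exact hadj.ne rfl
        · exact hw (hCU.forcers_subset hwU)
      · rintro (rfl | hxU)
        · exact hxv rfl
        · exact hw (hCU.adj_mem hxU hx.symm)
    · exact Forced.init fun hv' => hv' |>.elim hvu hv

lemma exists_of_isZFS [Finite V] (hS : IsZFS G S) : ∃ U, Chronology G S Set.univ U := by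
  obtain ⟨C, hSC, ⟨U, hCU⟩, hmax⟩ :=
    Finite.exists_le_maximal (p := fun C => ∃ U, Chronology G S C U) ⟨∅, nil⟩
  have hclosed : IsForcingClosed G C := fun u w hu hadj hother => by
    by_contra hw
    exact hw (hmax ⟨_, hCU.snoc hu hw hadj hother⟩ (Set.subset_insert w C) (Set.mem_insert w C))
  exact ⟨U, Set.eq_univ_of_forall (fun v => (hS v).mem_of_isForcingClosed hSC hclosed) ▸ hCU⟩

variable {v v' : V}

lemma mem_of_forall_adj_eq (h : Chronology G S C U) (hv : ∀ x, G.Adj v x → x = v')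
    (hvS : v ∉ S) (hvC : v ∈ C) : v' ∈ C := by
  induction h with
  | nil => exact absurd hvC hvS
  | @snoc C U u w _ hu _ hadj _ ih =>
    rcases hvC with rfl | hvC
    · exact hv u hadj.symm ▸ Set.mem_insert_of_mem _ hu
    · exact Set.mem_insert_of_mem _ (ih hvC)

/-- A vertex outside `S` with a single neighbor `v'` is forced by `v'`, so it never forces. -/
lemma notMem_forcers_of_forall_adj_eq (h : Chronology G S C U)
    (hv : ∀ x, G.Adj v x → x = v') (hvS : v ∉ S) : v ∉ U := by
  induction h with
  | nil => exact Set.notMem_empty v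
  | @snoc C U u w hCU hu hw hadj _ ih =>
    rintro (rfl | hvU)
    · exact hw (hv w hadj ▸ hCU.mem_of_forall_adj_eq hv hvS hu)
    · exact ih hvU

end Chronology

lemma exists_isZFS_mem_ncard_le [Finite V] {S : Set V} {v v' : V}
    (hv : ∀ x, G.Adj v x → x = v') (hS : IsZFS G S) :
    ∃ T, IsZFS G T ∧ v ∈ T ∧ T.ncard ≤ S.ncard := by
  by_cases hvS : v ∈ S
  · exact ⟨S, hS, hvS, le_rfl⟩
  obtain ⟨U, hU⟩ := Chronology.exists_of_isZFS hS
  refine ⟨Uᶜ, hU.isZFS_compl, hU.notMem_forcers_of_forall_adj_eq hv hvS, ?_⟩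
  rw [Set.ncard_compl_of_ncard_eq_add U (by rw [← Set.ncard_univ, hU.ncard_eq])]

structure IsPendentPath (G : SimpleGraph V) (m : ℕ) (p : ℕ → V) : Prop where
  injOn : Set.InjOn p (Set.Iic m)
  adj : ∀ i < m, G.Adj (p i) (p (i + 1))
  neighborSet_zero : G.neighborSet (p 0) = {p 1}
  neighborSet_succ : ∀ i, i + 1 < m → G.neighborSet (p (i + 1)) = {p i, p (i + 2)}

namespace IsPendentPath

variable {m : ℕ} {p : ℕ → V}

lemma of_deg (hm : 1 ≤ m) (hinj : ∀ j j', j ≤ m → j' ≤ m → p j = p j' → j = j')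
    (hchain : ∀ j, j < m → G.Adj (p j) (p (j + 1))) (hleaf : deg G (p 0) = 1)
    (hmid : ∀ j, 1 ≤ j → j < m → deg G (p j) = 2) : IsPendentPath G m p := by
  unfold deg at hleaf hmid
  exact {
    injOn := fun i hi j hj => hinj i j hi hj
    adj := hchain
    neighborSet_zero := by
      refine (Set.eq_of_subset_of_ncard_le (by simpa using hchain 0 (by omega))
        (by rw [Set.ncard_singleton, hleaf]) (Set.finite_of_ncard_ne_zero (by omega))).symm
    neighborSet_succ := fun i hi => by
      have hdeg := hmid (i + 1) (by omega) hi
      refine (Set.eq_of_subset_of_ncard_le ?_ ?_ (Set.finite_of_ncard_ne_zero (by omega))).symm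
      · simpa [Set.insert_subset_iff] using ⟨(hchain i (by omega)).symm, hchain (i + 1) hi⟩
      · rw [Set.ncard_pair fun h => by have := hinj i (i + 2) (by omega) (by omega) h; omega,
          hdeg] }

variable (hP : IsPendentPath G m p)
include hP

lemma apply_ne {i j : ℕ} (hi : i ≤ m) (hj : j ≤ m) (hij : i ≠ j) : p i ≠ p j :=
  hP.injOn.ne hi hj hij

lemma eq_of_adj_zero {x : V} (hx : G.Adj (p 0) x) : x = p 1 := by
  rwa [← mem_neighborSet, hP.neighborSet_zero] at hx

lemma exists_eq_of_adj {i : ℕ} {x : V} (hi : i < m) (hx : G.Adj (p i) x) :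
    ∃ j, x = p j ∧ (j + 1 = i ∨ j = i + 1) := by
  cases i with
  | zero => exact ⟨1, hP.eq_of_adj_zero hx, Or.inr rfl⟩
  | succ i =>
    rw [← mem_neighborSet, hP.neighborSet_succ i hi] at hx
    rcases hx with rfl | rfl
    · exact ⟨i, rfl, Or.inl rfl⟩
    · exact ⟨i + 2, rfl, Or.inr rfl⟩

variable {S : Set V}

lemma forced_succ {i : ℕ} (hi : i < m) (h : Forced G S (p i))
    (hpred : ∀ j, j + 1 = i → Forced G S (p j)) : Forced G S (p (i + 1)) :=
  Forced.force h (hP.adj i hi) fun x hx hne => by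
    obtain ⟨j, rfl, hj | rfl⟩ := hP.exists_eq_of_adj hi hx
    · exact hpred j hj
    · exact absurd rfl hne

lemma forced_of_forced_zero (h0 : Forced G S (p 0)) {i : ℕ} (hi : i ≤ m) : Forced G S (p i) := by
  induction i using Nat.strong_induction_on with
  | _ i ih =>
    cases i with
    | zero => exact h0
    | succ i =>
      exact hP.forced_succ (by omega) (ih i (by omega) (by omega))
        fun j hj => ih j (by omega) (by omega)

lemma forced_of_forced_succ_succ {i : ℕ} (hi : i + 1 < m) (h1 : Forced G S (p (i + 1)))
    (h2 : Forced G S (p (i + 2))) : Forced G S (p i) :=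
  Forced.force h1 (hP.adj i (by omega)).symm fun x hx hne => by
    obtain ⟨j, rfl, hj | rfl⟩ := hP.exists_eq_of_adj hi hx
    · obtain rfl : j = i := by omega
      exact absurd rfl hne
    · exact h2

/-- Only `p (k + 1)` leads into the segment `p 0, …, p k`, so when that segment avoids `S`, the
first of its vertices to turn blue is forced from a blue `p (k + 1)`. -/
lemma forced_succ_of_forced {k : ℕ} (hk : k < m) (hS : ∀ i ≤ k, p i ∉ S)
    (h : Forced G S (p k)) : Forced G S (p (k + 1)) := by
  suffices ∀ v, Forced G S v → ∀ i ≤ k, v = p i → Forced G S (p (k + 1)) from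
    this _ h k le_rfl rfl
  intro v hv
  induction hv with
  | init hv => rintro i hi rfl; exact absurd hv (hS i hi)
  | force hu hadj _ ihu _ =>
    rintro i hi rfl
    obtain ⟨j, rfl, hj⟩ := hP.exists_eq_of_adj (by omega) hadj.symm
    by_cases hjk : j = k + 1
    · exact hjk ▸ hu
    · exact ihu j (by omega) rfl

lemma isZFS_of_isZFS_insert {i : ℕ} (hi : i + 3 ≤ m) (hS : ∀ k ≤ i + 2, p k ∉ S)
    (h : IsZFS G (insert (p (i + 1)) S)) : IsZFS G S := by
  have hsucc : ∀ k ≤ i + 2, Forced G S (p k) → Forced G S (p (k + 1)) := fun k hk =>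
    hP.forced_succ_of_forced (by omega) fun l hl => hS l (by omega)
  have hmid : Forced G S (p (i + 1)) := by
    by_contra hnot
    have hnbr : ∀ x, G.Adj (p (i + 1)) x → ¬ Forced G S x := by
      intro x hx hx'
      obtain ⟨j, rfl, hj | rfl⟩ := hP.exists_eq_of_adj (by omega) hx
      · obtain rfl : j = i := by omega
        exact hnot (hsucc j (by omega) hx')
      · exact hnot (hP.forced_of_forced_succ_succ (by omega) hx' (hsucc (i + 2) le_rfl hx'))
    have hadj : G.Adj (p (i + 1)) (p (i + 2)) := hP.adj (i + 1) (by omega)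
    rcases (h (p (i + 2))).eq_or_forced_of_insert (hP.adj i (by omega)).symm hadj
      (hP.apply_ne (by omega) (by omega) (by omega)) hnbr with heq | hforced
    · exact hP.apply_ne (by omega) (by omega) (by omega) heq
    · exact hnbr _ hadj hforced
  exact h.of_forall_forced fun t ht => ht.elim (fun ht => ht ▸ hmid) Forced.init

lemma isZFS_insert_zero_iff (hm : 2 ≤ m) :
    IsZFS G (insert (p 0) S) ↔ IsZFS G (insert (p 1) (insert (p 2) S)) := by
  constructor <;> intro h <;> refine h.of_forall_forced ?_
  · rintro t (rfl | ht)
    · exact hP.forced_of_forced_succ_succ (by omega) (Forced.init (by simp))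
        (Forced.init (by simp))
    · exact Forced.init (Set.mem_insert_of_mem _ (Set.mem_insert_of_mem _ ht))
  · have h0 : Forced G (insert (p 0) S) (p 0) := Forced.init (Set.mem_insert _ _)
    rintro t (rfl | rfl | ht)
    · exact hP.forced_of_forced_zero h0 (by omega)
    · exact hP.forced_of_forced_zero h0 (by omega)
    · exact Forced.init (Set.mem_insert_of_mem _ ht)

lemma isZFS_insert_zero_diff {X : Set V} (hX : IsZFS G X) :
    IsZFS G (insert (p 0) (X \ p '' Set.Iic m)) :=
  hX.of_forall_forced fun t ht => by
    by_cases htP : t ∈ p '' Set.Iic m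
    · obtain ⟨i, hi, rfl⟩ := htP
      exact hP.forced_of_forced_zero (Forced.init (Set.mem_insert _ _)) hi
    · exact Forced.init (Set.mem_insert_of_mem _ ⟨ht, htP⟩)

lemma isMinimalZFS_insert_one_two (hm : 4 ≤ m) (hS : ∀ i ≤ 3, p i ∉ S)
    (h : IsMinimalZFS G (insert (p 0) S)) : IsMinimalZFS G (insert (p 1) (insert (p 2) S)) := by
  rw [isMinimalZFS_iff] at h ⊢
  obtain ⟨hzfs, hmin⟩ := h
  have hS' : ¬ IsZFS G S := fun hz =>
    hmin (p 0) (Set.mem_insert _ _) (hz.mono fun v hv =>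
      ⟨Set.mem_insert_of_mem _ hv, fun h => hS 0 (by omega) (h ▸ hv)⟩)
  refine ⟨(hP.isZFS_insert_zero_iff (by omega)).1 hzfs, ?_⟩
  rintro x (rfl | rfl | hx) hz
  · exact hS' (hP.isZFS_of_isZFS_insert (i := 1) (by omega) (fun k hk => hS k (by omega))
      (hz.mono fun v hv => (Set.mem_insert_iff.1 hv.1).resolve_left hv.2))
  · refine hS' (hP.isZFS_of_isZFS_insert (i := 0) (by omega) (fun k hk => hS k (by omega))
      (hz.mono ?_))
    rintro v ⟨rfl | rfl | hv, hne⟩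
    · exact Set.mem_insert _ _
    · exact absurd rfl hne
    · exact Set.mem_insert_of_mem _ hv
  · have hzx := (hP.isZFS_insert_zero_iff (S := S \ {x}) (by omega)).2 (hz.mono (by grind))
    exact hmin x (Set.mem_insert_of_mem _ hx) (hzx.mono (by grind))

end IsPendentPath

end ZF

/-- If a graph `G` has a pendent path of length four or more (a path
`p 0, p 1, …, p m` with `m ≥ 4`, where `p 0` has degree one in `G` and the vertices
`p 1, …, p (m-1)` have degree two in `G`), then `G` is not well-forced. -/
theorem pendent_path_not_wellforced {V : Type*} [Fintype V] (G : SimpleGraph V)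
    (m : ℕ) (hm : 4 ≤ m) (p : ℕ → V)
    (hinj : ∀ j j', j ≤ m → j' ≤ m → p j = p j' → j = j')
    (hchain : ∀ j, j < m → G.Adj (p j) (p (j + 1)))
    (hleaf : deg G (p 0) = 1)
    (hmid : ∀ j, 1 ≤ j → j < m → deg G (p j) = 2) :
    ¬ WellForced G := by
  intro hwf
  have hP := IsPendentPath.of_deg (by omega) hinj hchain hleaf hmid
  obtain ⟨B, hB, hBcard⟩ := exists_isZFS_ncard_eq_zfNum G
  obtain ⟨X, hX, h0X, hXB⟩ := exists_isZFS_mem_ncard_le (fun _ => hP.eq_of_adj_zero) hB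
  set Y := X \ p '' Set.Iic m
  have hY : ∀ i ≤ m, p i ∉ Y := fun i hi hpi => hpi.2 ⟨i, hi, rfl⟩
  have hW₀ : IsMinimalZFS G (insert (p 0) Y) :=
    (hP.isZFS_insert_zero_diff hX).isMinimalZFS_of_ncard_le <| calc
      (insert (p 0) Y).ncard ≤ X.ncard :=
        Set.ncard_le_ncard (Set.insert_subset h0X Set.sdiff_subset)
      _ ≤ zfNum G := hXB.trans hBcard.le
  have hW := hP.isMinimalZFS_insert_one_two hm (fun i hi => hY i (by omega)) hW₀
  have h₀ := hwf _ hW₀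
  have h₁ := hwf _ hW
  have hp12 : p 1 ∉ insert (p 2) Y := by
    rintro (h | h)
    · exact hP.apply_ne (by omega) (by omega) (by omega) h
    · exact hY 1 (by omega) h
  rw [Set.ncard_insert_of_notMem (hY 0 (by omega))] at h₀
  rw [Set.ncard_insert_of_notMem hp12, Set.ncard_insert_of_notMem (hY 2 (by omega))] at h₁
  omega
end
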